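/- arXiv:2305.08742 — 6 statements merged into one kernel-verified Lean document; each statement's English description precedes it below -/
import Mathlib

section
/- Let H be an n×n real symmetric positive definite matrix, let P be an n×N real matrix of full column rank N ≤ n, and let g ∈ ℝⁿ. Then gᵀ P (Pᵀ H P)⁻¹ Pᵀ g ≤ gᵀ H⁻¹ g. -/
/-!
Completing the square in `v - H⁻¹ g` shows `2 g·v - vᵀ H v ≤ gᵀ H⁻¹ g` for every `v`. For
`v = P w` with `w` solving the normal equations `Pᵀ H P w = Pᵀ g` one has `vᵀ H v = g·v`, so the
left-hand side equals `g·v = gᵀ P (Pᵀ H P)⁻¹ Pᵀ g`. The normal equations are uniquely solvable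
because `Pᵀ H P` is positive definite, `P` being injective by the rank hypothesis.
-/

open Matrix

namespace Matrix

variable {m n : Type*} [Fintype n]

theorem mulVec_injective_of_rank_eq_card {K : Type*} [Field K] (P : Matrix m n K)
    (hP : P.rank = Fintype.card n) : Function.Injective P.mulVec := by
  rw [mulVec_injective_iff, linearIndependent_iff_card_eq_finrank_span, ← hP,
    rank_eq_finrank_span_cols]
  rfl

theorem dotProduct_mulVec_of_normal_eq [Fintype m] {R : Type*} [CommSemiring R]
    (H : Matrix m m R) (P : Matrix m n R) {g : m → R} {w : n → R}
    (hw : (Pᵀ * H * P) *ᵥ w = Pᵀ *ᵥ g) :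
    P *ᵥ w ⬝ᵥ H *ᵥ (P *ᵥ w) = g ⬝ᵥ P *ᵥ w := by
  calc P *ᵥ w ⬝ᵥ H *ᵥ (P *ᵥ w) = w ⬝ᵥ (Pᵀ * H * P) *ᵥ w := by
        rw [← mulVec_mulVec, ← mulVec_mulVec, dotProduct_mulVec w, vecMul_transpose]
    _ = g ⬝ᵥ P *ᵥ w := by rw [hw, dotProduct_mulVec, vecMul_transpose, dotProduct_comm]

variable {R : Type*} [Field R] [LinearOrder R] [IsStrictOrderedRing R] [StarRing R] [TrivialStar R]

theorem PosSemidef.two_mul_dotProduct_sub_le [DecidableEq n] {H : Matrix n n R}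
    (hH : H.PosSemidef) (hHu : IsUnit H) (g v : n → R) :
    2 * (g ⬝ᵥ v) - v ⬝ᵥ H *ᵥ v ≤ g ⬝ᵥ H⁻¹ *ᵥ g := by
  have hHt : Hᵀ = H := by simpa [conjTranspose_eq_transpose_of_trivial] using hH.1.eq
  have key := hH.dotProduct_mulVec_nonneg (v - H⁻¹ *ᵥ g)
  have hinv : H *ᵥ (H⁻¹ *ᵥ g) = g := by
    rw [mulVec_mulVec, mul_nonsing_inv _ ((isUnit_iff_isUnit_det H).mp hHu), one_mulVec]
  have hcross : H⁻¹ *ᵥ g ⬝ᵥ H *ᵥ v = g ⬝ᵥ v := by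
    rw [dotProduct_mulVec, ← mulVec_transpose, hHt, hinv]
  simp only [star_trivial, mulVec_sub, dotProduct_sub, sub_dotProduct, hinv, hcross] at key
  rw [dotProduct_comm v g, dotProduct_comm (H⁻¹ *ᵥ g) g] at key
  linarith

end Matrix

theorem stmt0_general {n N : ℕ}
    (H : Matrix (Fin n) (Fin n) ℝ) (hH : H.PosDef)
    (P : Matrix (Fin n) (Fin N) ℝ) (hP : P.rank = N)
    (g : Fin n → ℝ) :
    g ⬝ᵥ ((P * (Pᵀ * H * P)⁻¹ * Pᵀ) *ᵥ g) ≤ g ⬝ᵥ (H⁻¹ *ᵥ g) := by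
  have hA : (Pᵀ * H * P).PosDef := by
    simpa [conjTranspose_eq_transpose_of_trivial] using
      hH.conjTranspose_mul_mul_same (P.mulVec_injective_of_rank_eq_card (by simpa using hP))
  set w := (Pᵀ * H * P)⁻¹ *ᵥ (Pᵀ *ᵥ g)
  have hw : (Pᵀ * H * P) *ᵥ w = Pᵀ *ᵥ g := by
    rw [mulVec_mulVec, mul_nonsing_inv _ ((isUnit_iff_isUnit_det _).mp hA.isUnit), one_mulVec]
  have hv : (P * (Pᵀ * H * P)⁻¹ * Pᵀ) *ᵥ g = P *ᵥ w := by
    simp only [w, mulVec_mulVec, Matrix.mul_assoc]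
  calc g ⬝ᵥ ((P * (Pᵀ * H * P)⁻¹ * Pᵀ) *ᵥ g)
      = 2 * (g ⬝ᵥ P *ᵥ w) - P *ᵥ w ⬝ᵥ H *ᵥ (P *ᵥ w) := by
        rw [hv, dotProduct_mulVec_of_normal_eq H P hw]; ring
    _ ≤ g ⬝ᵥ (H⁻¹ *ᵥ g) := hH.posSemidef.two_mul_dotProduct_sub_le hH.isUnit g _

/-- Let `H` be an `n×n` real symmetric positive definite matrix,
`P` an `n×N` real matrix of full column rank `N ≤ n`, and `g ∈ ℝⁿ`. Then
`gᵀ P (Pᵀ H P)⁻¹ Pᵀ g ≤ gᵀ H⁻¹ g`. -/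
theorem stmt0 {n N : ℕ} (hNn : N ≤ n)
    (H : Matrix (Fin n) (Fin n) ℝ) (hH : H.PosDef)
    (P : Matrix (Fin n) (Fin N) ℝ) (hP : P.rank = N)
    (g : Fin n → ℝ) :
    g ⬝ᵥ ((P * (Pᵀ * H * P)⁻¹ * Pᵀ) *ᵥ g) ≤ g ⬝ᵥ (H⁻¹ *ᵥ g) :=
  stmt0_general H hH P hP g
end

section
/- With the truncated approximation Q of A one has (σ_n/σ_{N+1}) · gᵀ A⁻¹ g ≤ gᵀ Q⁻¹ g ≤ gᵀ A⁻¹ g, i.e., √(σ_n/σ_{N+1}) · λ ≤ λ̄ ≤ λ. -/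
/-!
In the orthonormal eigenbasis `u` both inverses are diagonal, so
`gᵀ A⁻¹ g = ∑ σᵢ⁻¹ (uᵢ ⬝ g)²` and `gᵀ Q⁻¹ g = ∑ τᵢ⁻¹ (uᵢ ⬝ g)²`, where by monotonicity of `σ`
the truncated eigenvalues are `τᵢ = max σᵢ σ_{N+1}`. Both inequalities are then termwise:
`σᵢ ≤ τᵢ`, and `(σ_n / σ_{N+1}) τᵢ ≤ σᵢ` because `σ_n` is the smallest eigenvalue.
-/

open Matrix

namespace Matrix

variable {ι K : Type*} [Fintype ι] [DecidableEq ι] [Field K]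

theorem of_mul_transpose_self_eq_one {u : ι → ι → K}
    (hu : ∀ i j, u i ⬝ᵥ u j = if i = j then 1 else 0) : of u * (of u)ᵀ = 1 := by
  ext i j
  simpa [mul_apply, one_apply, dotProduct] using hu i j

theorem mul_transpose_of_eq_transpose_of_mul_diagonal {M : Matrix ι ι K} {u : ι → ι → K}
    {w : ι → K} (hM : ∀ i, M *ᵥ u i = w i • u i) : M * (of u)ᵀ = (of u)ᵀ * diagonal w := by
  ext i j
  rw [mul_diagonal]
  simpa [mul_apply, mulVec, dotProduct, mul_comm] using congrFun (hM j) i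

theorem inv_eq_of_orthonormal_eigenvectors {M : Matrix ι ι K} {u : ι → ι → K} {w : ι → K}
    (hu : ∀ i j, u i ⬝ᵥ u j = if i = j then 1 else 0) (hw : ∀ i, w i ≠ 0)
    (hM : ∀ i, M *ᵥ u i = w i • u i) : M⁻¹ = (of u)ᵀ * diagonal w⁻¹ * of u := by
  refine inv_eq_right_inv ?_
  rw [← Matrix.mul_assoc, ← Matrix.mul_assoc, mul_transpose_of_eq_transpose_of_mul_diagonal hM,
    Matrix.mul_assoc _ (diagonal w), diagonal_mul_diagonal]
  simp [hw, mul_eq_one_comm.mp (of_mul_transpose_self_eq_one hu)]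

theorem dotProduct_transpose_mul_diagonal_mul_mulVec (U : Matrix ι ι K) (d g : ι → K) :
    g ⬝ᵥ ((Uᵀ * diagonal d * U) *ᵥ g) = ∑ i, d i * (U *ᵥ g) i ^ 2 := by
  rw [← mulVec_mulVec, ← mulVec_mulVec, dotProduct_mulVec, ← mulVec_transpose, transpose_transpose]
  simp [dotProduct, mulVec_diagonal, sq, mul_left_comm]

theorem dotProduct_inv_mulVec_eq_sum {M : Matrix ι ι K} {u : ι → ι → K} {w : ι → K}
    (hu : ∀ i j, u i ⬝ᵥ u j = if i = j then 1 else 0) (hw : ∀ i, w i ≠ 0)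
    (hM : ∀ i, M *ᵥ u i = w i • u i) (g : ι → K) :
    g ⬝ᵥ (M⁻¹ *ᵥ g) = ∑ i, (w i)⁻¹ * (u i ⬝ᵥ g) ^ 2 := by
  rw [inv_eq_of_orthonormal_eigenvectors hu hw hM, dotProduct_transpose_mul_diagonal_mul_mulVec]
  rfl

end Matrix

theorem Finset.mul_sum_inv_mul_le_sum_inv_mul {ι : Type*} (s : Finset ι) {r : ℝ}
    {a b c : ι → ℝ} (ha : ∀ i ∈ s, 0 < a i) (hb : ∀ i ∈ s, 0 < b i) (hc : ∀ i ∈ s, 0 ≤ c i)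
    (hab : ∀ i ∈ s, r * b i ≤ a i) :
    r * ∑ i ∈ s, (a i)⁻¹ * c i ≤ ∑ i ∈ s, (b i)⁻¹ * c i := by
  rw [Finset.mul_sum]
  refine Finset.sum_le_sum fun i hi => ?_
  rw [← mul_assoc]
  gcongr
  · exact hc i hi
  · rw [← div_eq_mul_inv, div_le_iff₀ (ha i hi), inv_mul_eq_div, le_div_iff₀ (hb i hi)]
    exact hab i hi

theorem div_mul_max_le {a b m : ℝ} (hm : 0 ≤ m) (hb : 0 < b) (hma : m ≤ a) (hmb : m ≤ b) :
    m / b * max a b ≤ a := by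
  rcases le_total a b with hab | hab
  · rw [max_eq_right hab, div_mul_cancel₀ m hb.ne']
    exact hma
  · rw [max_eq_left hab]
    exact mul_le_of_le_one_left (hm.trans hma) ((div_le_one hb).2 hmb)

/-- With the truncated approximation `Q` of `A` one has
`(σ_n/σ_{N+1}) · gᵀ A⁻¹ g ≤ gᵀ Q⁻¹ g ≤ gᵀ A⁻¹ g`, i.e.
`√(σ_n/σ_{N+1}) · λ ≤ λ̄ ≤ λ`.  (`A` is symmetric positive definite with
eigenvalues `σ_1 ≥ … ≥ σ_n > 0` and orthonormal eigenvectors `u_1, …, u_n`;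
`Q` has the same eigenvectors, with eigenvalues `σ_i` for `i ≤ N` and
`σ_{N+1}` for `i > N`; here indices are 0-based, so `σ_{N+1}` is `σ ⟨N, _⟩`
and `σ_n` is `σ ⟨n-1, _⟩`.) -/
theorem stmt1 {n N : ℕ} (hNn : N < n)
    (A Q : Matrix (Fin n) (Fin n) ℝ)
    (σ : Fin n → ℝ) (u : Fin n → Fin n → ℝ)
    (hσpos : ∀ i, 0 < σ i)
    (hσmono : ∀ i j : Fin n, i ≤ j → σ j ≤ σ i)
    (hortho : ∀ i j : Fin n, u i ⬝ᵥ u j = if i = j then (1 : ℝ) else 0)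
    (hAeig : ∀ i, A *ᵥ u i = σ i • u i)
    (hQeig : ∀ i : Fin n, Q *ᵥ u i = (if (i : ℕ) < N then σ i else σ ⟨N, hNn⟩) • u i)
    (g : Fin n → ℝ) :
    (σ ⟨n - 1, by omega⟩ / σ ⟨N, hNn⟩) * (g ⬝ᵥ (A⁻¹ *ᵥ g)) ≤ g ⬝ᵥ (Q⁻¹ *ᵥ g) ∧
    g ⬝ᵥ (Q⁻¹ *ᵥ g) ≤ g ⬝ᵥ (A⁻¹ *ᵥ g) ∧
    Real.sqrt (σ ⟨n - 1, by omega⟩ / σ ⟨N, hNn⟩) * Real.sqrt (g ⬝ᵥ (A⁻¹ *ᵥ g))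
        ≤ Real.sqrt (g ⬝ᵥ (Q⁻¹ *ᵥ g)) ∧
    Real.sqrt (g ⬝ᵥ (Q⁻¹ *ᵥ g)) ≤ Real.sqrt (g ⬝ᵥ (A⁻¹ *ᵥ g)) := by
  set σmin := σ ⟨n - 1, by omega⟩
  set σN := σ ⟨N, hNn⟩
  have hσmin : ∀ i, σmin ≤ σ i := fun i => hσmono _ _ (Fin.le_def.2 (by simp; omega))
  have hQeig_max : ∀ i, Q *ᵥ u i = max (σ i) σN • u i := by
    intro i
    rw [hQeig]
    split_ifs with h
    · rw [max_eq_left (hσmono _ _ (Fin.le_def.2 h.le))]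
    · rw [max_eq_right (hσmono _ _ (Fin.le_def.2 (not_lt.1 h)))]
  rw [dotProduct_inv_mulVec_eq_sum hortho (fun i => (hσpos i).ne') hAeig,
    dotProduct_inv_mulVec_eq_sum hortho
      (fun i => ((hσpos i).trans_le (le_max_left _ _)).ne') hQeig_max]
  have hupper : ∑ i, (max (σ i) σN)⁻¹ * (u i ⬝ᵥ g) ^ 2 ≤ ∑ i, (σ i)⁻¹ * (u i ⬝ᵥ g) ^ 2 := by
    gcongr with i
    · exact hσpos i
    · exact le_max_left _ _
  have hlower := Finset.univ.mul_sum_inv_mul_le_sum_inv_mul (r := σmin / σN)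
    (fun i _ => hσpos i) (fun i _ => (hσpos i).trans_le (le_max_left _ _))
    (fun i _ => sq_nonneg (u i ⬝ᵥ g))
    (fun i _ => div_mul_max_le (hσpos _).le (hσpos _) (hσmin i) (hσmin _))
  refine ⟨hlower, hupper, ?_, Real.sqrt_le_sqrt hupper⟩
  rw [← Real.sqrt_mul (div_nonneg (hσpos _).le (hσpos _).le)]
  exact Real.sqrt_le_sqrt hlower
end

section
/- With the coarse truncated approximation Q of H_r, d := −H⁻¹ g and d̂ := −P Q⁻¹ Pᵀ g, one has ‖H^{1/2} (d − d̂)‖₂² ≤ λ² − λ̂², i.e., ‖H^{1/2} (d − d̂)‖₂ ≤ √(λ² − λ̂²). -/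
/-! Write `d̂ = P z` with `Q z = Pᵀ g`. Since `Q` shares the eigenvectors of `H_r` and only raises
its eigenvalues, `zᵀ H_r z ≤ zᵀ Q z = zᵀ Pᵀ g`. Completing the square in the `H`-norm,
`‖H^{1/2} (d − d̂)‖² = zᵀ H_r z − 2 zᵀ Pᵀ g + λ²`, and `zᵀ Pᵀ g = λ̂²`, which gives the bound. -/

open Matrix

namespace Matrix

section Eigenbasis

variable {ι R : Type*} [Fintype ι] [DecidableEq ι] [CommRing R] {u : ι → ι → R}

theorem of_mul_transpose_of_orthonormal
    (hu : ∀ i j, u i ⬝ᵥ u j = if i = j then 1 else 0) : of u * (of u)ᵀ = 1 := by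
  ext i j
  simpa [mul_apply, one_apply, dotProduct] using hu i j

theorem eq_transpose_mul_diagonal_mul_of_mulVec_eq
    (hu : ∀ i j, u i ⬝ᵥ u j = if i = j then 1 else 0) {A : Matrix ι ι R} {c : ι → R}
    (hA : ∀ i, A *ᵥ u i = c i • u i) : A = (of u)ᵀ * diagonal c * of u := by
  have hAU : A * (of u)ᵀ = (of u)ᵀ * diagonal c := by
    ext i j
    simpa [mul_apply, mulVec, dotProduct, diagonal_apply, mul_comm] using congrFun (hA j) i
  rw [← hAU, Matrix.mul_assoc, mul_eq_one_comm.mp (of_mul_transpose_of_orthonormal hu),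
    Matrix.mul_one]

theorem dotProduct_mulVec_eq_sum_of_mulVec_eq
    (hu : ∀ i j, u i ⬝ᵥ u j = if i = j then 1 else 0) {A : Matrix ι ι R} {c : ι → R}
    (hA : ∀ i, A *ᵥ u i = c i • u i) (x : ι → R) :
    x ⬝ᵥ (A *ᵥ x) = ∑ i, c i * (u i ⬝ᵥ x) ^ 2 := by
  rw [eq_transpose_mul_diagonal_mul_of_mulVec_eq hu hA, Matrix.mul_assoc, ← mulVec_mulVec,
    dotProduct_mulVec, vecMul_transpose, ← mulVec_mulVec]
  simp only [dotProduct, mulVec_diagonal]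
  refine Finset.sum_congr rfl fun i _ => by simp only [mulVec, of_apply, dotProduct]; ring

theorem isUnit_det_of_mulVec_eq
    (hu : ∀ i j, u i ⬝ᵥ u j = if i = j then 1 else 0) {A : Matrix ι ι R} {c : ι → R}
    (hA : ∀ i, A *ᵥ u i = c i • u i) (hc : ∀ i, IsUnit (c i)) : IsUnit A.det := by
  have hU : IsUnit (of u).det :=
    IsUnit.of_mul_eq_one (of u)ᵀ.det (by
      rw [← det_mul, of_mul_transpose_of_orthonormal hu, det_one])
  rw [eq_transpose_mul_diagonal_mul_of_mulVec_eq hu hA, det_mul, det_mul, det_transpose,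
    det_diagonal]
  exact (hU.mul (IsUnit.prod_univ_iff.mpr hc)).mul hU

theorem dotProduct_mulVec_le_of_mulVec_eq [LinearOrder R] [IsStrictOrderedRing R]
    (hu : ∀ i j, u i ⬝ᵥ u j = if i = j then 1 else 0) {A B : Matrix ι ι R} {a b : ι → R}
    (hA : ∀ i, A *ᵥ u i = a i • u i) (hB : ∀ i, B *ᵥ u i = b i • u i) (hab : ∀ i, a i ≤ b i)
    (x : ι → R) : x ⬝ᵥ (A *ᵥ x) ≤ x ⬝ᵥ (B *ᵥ x) := by
  rw [dotProduct_mulVec_eq_sum_of_mulVec_eq hu hA, dotProduct_mulVec_eq_sum_of_mulVec_eq hu hB]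
  exact Finset.sum_le_sum fun i _ => mul_le_mul_of_nonneg_right (hab i) (sq_nonneg _)

end Eigenbasis

variable {m n R : Type*} [Fintype m] [Fintype n] [CommRing R]

theorem IsSymm.mulVec_dotProduct_mulVec {S : Matrix n n R} (hS : S.IsSymm) (v w : n → R) :
    (S *ᵥ v) ⬝ᵥ (S *ᵥ w) = v ⬝ᵥ ((S * S) *ᵥ w) := by
  rw [← mulVec_mulVec, dotProduct_mulVec v, ← mulVec_transpose, hS.eq]

theorem IsSymm.sub_dotProduct_mulVec_sub {H : Matrix n n R} (hH : H.IsSymm) {a g : n → R}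
    (ha : H *ᵥ a = g) (b : n → R) :
    (b - a) ⬝ᵥ (H *ᵥ (b - a)) = b ⬝ᵥ (H *ᵥ b) - 2 * (b ⬝ᵥ g) + a ⬝ᵥ g := by
  have hsymm : a ⬝ᵥ (H *ᵥ b) = b ⬝ᵥ g := by
    rw [dotProduct_mulVec, ← mulVec_transpose, hH.eq, ha, dotProduct_comm]
  rw [mulVec_sub, dotProduct_sub, sub_dotProduct, sub_dotProduct, hsymm, ha]
  ring

theorem IsSymm.sub_dotProduct_mulVec_sub_le [LinearOrder R] [IsStrictOrderedRing R]
    {H : Matrix n n R} (hH : H.IsSymm) {a g : n → R} (ha : H *ᵥ a = g) (P : Matrix n m R)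
    {z : m → R} (hz : z ⬝ᵥ ((Pᵀ * H * P) *ᵥ z) ≤ z ⬝ᵥ (Pᵀ *ᵥ g)) :
    (P *ᵥ z - a) ⬝ᵥ (H *ᵥ (P *ᵥ z - a)) ≤ g ⬝ᵥ a - (Pᵀ *ᵥ g) ⬝ᵥ z := by
  have hPz : (P *ᵥ z) ⬝ᵥ g = z ⬝ᵥ (Pᵀ *ᵥ g) := by
    rw [dotProduct_comm, dotProduct_mulVec, ← mulVec_transpose, dotProduct_comm]
  have hPHP : (P *ᵥ z) ⬝ᵥ (H *ᵥ (P *ᵥ z)) = z ⬝ᵥ ((Pᵀ * H * P) *ᵥ z) := by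
    rw [Matrix.mul_assoc, ← mulVec_mulVec, ← mulVec_mulVec, mulVec_transpose,
      dotProduct_comm z, ← dotProduct_mulVec, dotProduct_comm]
  rw [hH.sub_dotProduct_mulVec_sub ha, hPHP, hPz, dotProduct_comm a, dotProduct_comm _ z]
  linarith

end Matrix

theorem stmt7_general {n N p : ℕ} (hpN : p < N)
    (H : Matrix (Fin n) (Fin n) ℝ) (hH : H.PosDef)
    (P : Matrix (Fin n) (Fin N) ℝ)
    (σ : Fin N → ℝ) (u : Fin N → Fin N → ℝ)
    (hσpos : ∀ i, 0 < σ i)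
    (hσmono : ∀ i j : Fin N, i ≤ j → σ j ≤ σ i)
    (hortho : ∀ i j : Fin N, u i ⬝ᵥ u j = if i = j then (1 : ℝ) else 0)
    (hHreig : ∀ i, (Pᵀ * H * P) *ᵥ u i = σ i • u i)
    (Q : Matrix (Fin N) (Fin N) ℝ)
    (hQeig : ∀ i : Fin N, Q *ᵥ u i = (if (i : ℕ) < p then σ i else σ ⟨p, hpN⟩) • u i)
    (S : Matrix (Fin n) (Fin n) ℝ) (hS : S.PosDef) (hSS : S * S = H)
    (g : Fin n → ℝ) :
    (S *ᵥ (-(H⁻¹ *ᵥ g) - -(P *ᵥ (Q⁻¹ *ᵥ (Pᵀ *ᵥ g)))))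
        ⬝ᵥ (S *ᵥ (-(H⁻¹ *ᵥ g) - -(P *ᵥ (Q⁻¹ *ᵥ (Pᵀ *ᵥ g)))))
      ≤ g ⬝ᵥ (H⁻¹ *ᵥ g) - (Pᵀ *ᵥ g) ⬝ᵥ (Q⁻¹ *ᵥ (Pᵀ *ᵥ g)) ∧
    Real.sqrt ((S *ᵥ (-(H⁻¹ *ᵥ g) - -(P *ᵥ (Q⁻¹ *ᵥ (Pᵀ *ᵥ g)))))
        ⬝ᵥ (S *ᵥ (-(H⁻¹ *ᵥ g) - -(P *ᵥ (Q⁻¹ *ᵥ (Pᵀ *ᵥ g))))))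
      ≤ Real.sqrt (g ⬝ᵥ (H⁻¹ *ᵥ g) - (Pᵀ *ᵥ g) ⬝ᵥ (Q⁻¹ *ᵥ (Pᵀ *ᵥ g))) := by
  set q : Fin N → ℝ := fun i => if (i : ℕ) < p then σ i else σ ⟨p, hpN⟩
  have hσq : ∀ i, σ i ≤ q i := fun i => by
    by_cases hi : (i : ℕ) < p
    · simp [q, hi]
    · simpa [q, hi] using hσmono ⟨p, hpN⟩ i (Fin.le_def.mpr (not_lt.mp hi))
  have hq : ∀ i, IsUnit (q i) := fun i => by
    by_cases hi : (i : ℕ) < p <;> simp [q, hi, (hσpos _).ne']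
  have hQdet : IsUnit Q.det := isUnit_det_of_mulVec_eq hortho hQeig hq
  have hHdet : IsUnit H.det := (isUnit_iff_isUnit_det H).mp hH.isUnit
  set z := Q⁻¹ *ᵥ (Pᵀ *ᵥ g)
  have hz : z ⬝ᵥ ((Pᵀ * H * P) *ᵥ z) ≤ z ⬝ᵥ (Pᵀ *ᵥ g) :=
    calc z ⬝ᵥ ((Pᵀ * H * P) *ᵥ z) ≤ z ⬝ᵥ (Q *ᵥ z) :=
          dotProduct_mulVec_le_of_mulVec_eq hortho hHreig hQeig hσq z
      _ = z ⬝ᵥ (Pᵀ *ᵥ g) := by rw [mulVec_mulVec, mul_nonsing_inv _ hQdet, one_mulVec]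
  have hHa : H *ᵥ (H⁻¹ *ᵥ g) = g := by rw [mulVec_mulVec, mul_nonsing_inv _ hHdet, one_mulVec]
  have hSsymm : S.IsSymm := isHermitian_iff_isSymm.mp hS.isHermitian
  have hHsymm : H.IsSymm := isHermitian_iff_isSymm.mp hH.isHermitian
  have key := hHsymm.sub_dotProduct_mulVec_sub_le hHa P hz
  rw [neg_sub_neg, hSsymm.mulVec_dotProduct_mulVec, hSS]
  exact ⟨key, Real.sqrt_le_sqrt key⟩

/-- With the coarse truncated approximation `Q` of
`H_r := Pᵀ H P`, `d := −H⁻¹ g` and `d̂ := −P Q⁻¹ Pᵀ g`, one has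
`‖H^{1/2} (d − d̂)‖₂² ≤ λ² − λ̂²`, i.e. `‖H^{1/2} (d − d̂)‖₂ ≤ √(λ² − λ̂²)`.
`S` denotes the positive definite square root of `H` and `‖v‖₂ = √(v ⬝ᵥ v)`. -/
theorem stmt7 {n N p : ℕ} (hp : 1 ≤ p) (hpN : p < N) (hNn : N < n)
    (H : Matrix (Fin n) (Fin n) ℝ) (hH : H.PosDef)
    (P : Matrix (Fin n) (Fin N) ℝ) (hP : P.rank = N)
    (σ : Fin N → ℝ) (u : Fin N → Fin N → ℝ)
    (hσpos : ∀ i, 0 < σ i)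
    (hσmono : ∀ i j : Fin N, i ≤ j → σ j ≤ σ i)
    (hortho : ∀ i j : Fin N, u i ⬝ᵥ u j = if i = j then (1 : ℝ) else 0)
    (hHreig : ∀ i, (Pᵀ * H * P) *ᵥ u i = σ i • u i)
    (Q : Matrix (Fin N) (Fin N) ℝ) (hQsymm : Q.IsSymm)
    (hQeig : ∀ i : Fin N, Q *ᵥ u i = (if (i : ℕ) < p then σ i else σ ⟨p, hpN⟩) • u i)
    (S : Matrix (Fin n) (Fin n) ℝ) (hS : S.PosDef) (hSS : S * S = H)
    (g : Fin n → ℝ) :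
    (S *ᵥ (-(H⁻¹ *ᵥ g) - -(P *ᵥ (Q⁻¹ *ᵥ (Pᵀ *ᵥ g)))))
        ⬝ᵥ (S *ᵥ (-(H⁻¹ *ᵥ g) - -(P *ᵥ (Q⁻¹ *ᵥ (Pᵀ *ᵥ g)))))
      ≤ g ⬝ᵥ (H⁻¹ *ᵥ g) - (Pᵀ *ᵥ g) ⬝ᵥ (Q⁻¹ *ᵥ (Pᵀ *ᵥ g)) ∧
    Real.sqrt ((S *ᵥ (-(H⁻¹ *ᵥ g) - -(P *ᵥ (Q⁻¹ *ᵥ (Pᵀ *ᵥ g)))))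
        ⬝ᵥ (S *ᵥ (-(H⁻¹ *ᵥ g) - -(P *ᵥ (Q⁻¹ *ᵥ (Pᵀ *ᵥ g))))))
      ≤ Real.sqrt (g ⬝ᵥ (H⁻¹ *ᵥ g) - (Pᵀ *ᵥ g) ⬝ᵥ (Q⁻¹ *ᵥ (Pᵀ *ᵥ g))) :=
  stmt7_general hpN H hH P σ u hσpos hσmono hortho hHreig Q hQeig S hS hSS g
end

section
/- Let f be a strictly convex standard self-concordant function on ℝⁿ and x a point with ∇f(x) ≠ 0. Let Q be the truncated approximation of A := ∇²f(x) with parameter N, let λ̄ := (∇f(x)ᵀ Q⁻¹ ∇f(x))^{1/2} and d̂ := −Q⁻¹ ∇f(x). If α ∈ (0, 1/2) and λ̄ ≤ (1 − 2α)/2, then the unit step satisfies the Armijo condition: f(x + d̂) ≤ f(x) − α λ̄². -/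
open Matrix

/-!
Along the line `φ t = f (x + t • d̂)`, self-concordance says that `t ↦ φ''(t)^{-1/2} + t` is
nondecreasing, so `φ''(t) ≤ λ² / (1 - λ t)²` with `λ² = φ''(0) = d̂ᵀ ∇²f(x) d̂`; integrating twice
over `[0, 1]` gives `φ(1) ≤ φ(0) + φ'(0) + λ² / (2 (1 - λ))`. Here `φ'(0) = -λ̄²`, and since `Q`
has the eigenvectors of `∇²f(x)` with larger eigenvalues, `λ² ≤ d̂ᵀ Q d̂ = λ̄²`. The bound
`λ̄ ≤ (1 - 2α) / 2` then gives `λ² / (2 (1 - λ)) ≤ (1 - α) λ̄²`.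
-/

section Eigenbasis

variable {ι : Type*} [Fintype ι] {u : ι → ι → ℝ}

theorem mulVec_sum_smul_of_eigen {M : Matrix ι ι ℝ} {μ : ι → ℝ}
    (hM : ∀ i, M *ᵥ u i = μ i • u i) (a : ι → ℝ) :
    M *ᵥ ∑ i, a i • u i = ∑ i, (μ i * a i) • u i := by
  simp only [mulVec_sum, mulVec_smul, hM, smul_smul, mul_comm]

variable [DecidableEq ι]

theorem sum_dotProduct_smul_eq_self (hu : ∀ i j, u i ⬝ᵥ u j = if i = j then 1 else 0)
    (v : ι → ℝ) : ∑ i, (u i ⬝ᵥ v) • u i = v := by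
  have hUUt : Matrix.of u * (Matrix.of u)ᵀ = 1 := by
    ext i j
    simpa [Matrix.mul_apply, Matrix.one_apply, dotProduct] using hu i j
  have hUtU : (Matrix.of u)ᵀ * Matrix.of u = 1 := mul_eq_one_comm.mp hUUt
  conv_rhs => rw [← one_mulVec v, ← hUtU, ← mulVec_mulVec]
  ext k
  simp [mulVec, dotProduct, Finset.sum_apply, mul_comm]

theorem dotProduct_mulVec_eq_sum_of_eigen (hu : ∀ i j, u i ⬝ᵥ u j = if i = j then 1 else 0)
    {M : Matrix ι ι ℝ} {μ : ι → ℝ} (hM : ∀ i, M *ᵥ u i = μ i • u i) (v : ι → ℝ) :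
    v ⬝ᵥ (M *ᵥ v) = ∑ i, μ i * (u i ⬝ᵥ v) ^ 2 := by
  conv_lhs => rw [← sum_dotProduct_smul_eq_self hu v]
  rw [mulVec_sum_smul_of_eigen hM, dotProduct_sum, sum_dotProduct_smul_eq_self hu v]
  refine Finset.sum_congr rfl fun i _ => ?_
  rw [dotProduct_smul, dotProduct_comm, smul_eq_mul]
  ring

theorem dotProduct_mulVec_le_of_eigen_le (hu : ∀ i j, u i ⬝ᵥ u j = if i = j then 1 else 0)
    {A B : Matrix ι ι ℝ} {σ μ : ι → ℝ} (hA : ∀ i, A *ᵥ u i = σ i • u i)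
    (hB : ∀ i, B *ᵥ u i = μ i • u i) (hσμ : ∀ i, σ i ≤ μ i) (v : ι → ℝ) :
    v ⬝ᵥ (A *ᵥ v) ≤ v ⬝ᵥ (B *ᵥ v) := by
  rw [dotProduct_mulVec_eq_sum_of_eigen hu hA, dotProduct_mulVec_eq_sum_of_eigen hu hB]
  exact Finset.sum_le_sum fun i _ => mul_le_mul_of_nonneg_right (hσμ i) (sq_nonneg _)

theorem isUnit_of_eigen_ne_zero (hu : ∀ i j, u i ⬝ᵥ u j = if i = j then 1 else 0)
    {M : Matrix ι ι ℝ} {μ : ι → ℝ} (hM : ∀ i, M *ᵥ u i = μ i • u i) (hμ : ∀ i, μ i ≠ 0) :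
    IsUnit M := by
  refine mulVec_surjective_iff_isUnit.mp fun v => ⟨∑ i, ((μ i)⁻¹ * (u i ⬝ᵥ v)) • u i, ?_⟩
  rw [mulVec_sum_smul_of_eigen hM]
  simp only [mul_inv_cancel_left₀ (hμ _)]
  exact sum_dotProduct_smul_eq_self hu v

end Eigenbasis

theorem iteratedDeriv_comp_line_eq {E F : Type*} [NormedAddCommGroup E] [NormedSpace ℝ E]
    [NormedAddCommGroup F] [NormedSpace ℝ F] (f : E → F) (x d : E) (k : ℕ) (t : ℝ) :
    iteratedDeriv k (fun s : ℝ => f (x + s • d)) t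
      = iteratedDeriv k (fun s : ℝ => f (x + t • d + s • d)) 0 := by
  have hshift : (fun s : ℝ => f (x + t • d + s • d)) = fun s => f (x + (t + s) • d) := by
    funext s
    rw [add_smul, add_assoc]
  rw [hshift, iteratedDeriv_comp_const_add (f := fun s : ℝ => f (x + s • d))]
  simp only [add_zero]

theorem mulVec_inv_mulVec {ι : Type*} [Fintype ι] [DecidableEq ι] {Q : Matrix ι ι ℝ}
    (hQ : IsUnit Q) (v : ι → ℝ) : Q *ᵥ (Q⁻¹ *ᵥ v) = v := by
  rw [mulVec_mulVec, mul_nonsing_inv _ ((isUnit_iff_isUnit_det Q).mp hQ), one_mulVec]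

theorem le_ite_of_antitone {n N : ℕ} (hNn : N < n) {σ : Fin n → ℝ}
    (hσ : ∀ i j : Fin n, i ≤ j → σ j ≤ σ i) (i : Fin n) :
    σ i ≤ if (i : ℕ) < N then σ i else σ ⟨N, hNn⟩ := by
  split_ifs with hi
  · exact le_rfl
  · exact hσ _ _ (Fin.mk_le_of_le_val (not_lt.mp hi))

theorem sq_div_two_mul_one_sub_le {lam lambar α : ℝ} (hα : 0 ≤ α) (hlam0 : 0 ≤ lam)
    (hlam : lam ≤ lambar) (hl : lambar ≤ (1 - 2 * α) / 2) :
    lam ^ 2 / (2 * (1 - lam)) ≤ (1 - α) * lambar ^ 2 := by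
  have hα1 : 0 ≤ 1 - 2 * α := by linarith
  have hfactor : 1 ≤ 2 * (1 - lam) * (1 - α) := by nlinarith [mul_nonneg hα hα1]
  rw [div_le_iff₀ (by linarith)]
  nlinarith [mul_le_mul_of_nonneg_left hfactor (sq_nonneg lambar), pow_le_pow_left₀ hlam0 hlam 2]

theorem le_of_hasDerivAt_le_of_le {f g f' g' : ℝ → ℝ} {a b : ℝ}
    (hf : ∀ t ∈ Set.Icc a b, HasDerivAt f (f' t) t) (hg : ∀ t ∈ Set.Icc a b, HasDerivAt g (g' t) t)
    (ha : f a ≤ g a) (hle : ∀ t ∈ Set.Ico a b, f' t ≤ g' t) :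
    ∀ t ∈ Set.Icc a b, f t ≤ g t :=
  image_le_of_deriv_right_le_deriv_boundary
    (fun t ht => (hf t ht).continuousAt.continuousWithinAt)
    (fun t ht => (hf t (Set.Ico_subset_Icc_self ht)).hasDerivWithinAt) ha
    (fun t ht => (hg t ht).continuousAt.continuousWithinAt)
    (fun t ht => (hg t (Set.Ico_subset_Icc_self ht)).hasDerivWithinAt) hle

section SelfConcordant

variable {ψ : ℝ → ℝ} (hψ : Differentiable ℝ ψ) (hpos : ∀ t, 0 < ψ t)
  (hsc : ∀ t, deriv ψ t ≤ 2 * ψ t ^ ((3 : ℝ) / 2))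
include hψ hpos hsc

theorem monotone_inv_sqrt_add_of_deriv_le : Monotone fun t => (√(ψ t))⁻¹ + t := by
  have hderiv : ∀ t, HasDerivAt (fun s => (√(ψ s))⁻¹ + s)
      (-(1 / (2 * √(ψ t)) * deriv ψ t) / √(ψ t) ^ 2 + 1) t := fun t =>
    (((Real.hasDerivAt_sqrt (hpos t).ne').comp t (hψ t).hasDerivAt).inv
      (Real.sqrt_pos.mpr (hpos t)).ne').add (hasDerivAt_id t)
  refine monotone_of_deriv_nonneg (fun t => (hderiv t).differentiableAt) fun t => ?_
  rw [(hderiv t).deriv]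
  have hs : 0 < √(ψ t) := Real.sqrt_pos.mpr (hpos t)
  have hrpow : ψ t ^ ((3 : ℝ) / 2) = √(ψ t) ^ 3 := by
    rw [Real.sqrt_eq_rpow, ← Real.rpow_natCast, ← Real.rpow_mul (hpos t).le]
    norm_num
  have h3 := hrpow ▸ hsc t
  have : -(1 / (2 * √(ψ t)) * deriv ψ t) / √(ψ t) ^ 2 + 1
      = (2 * √(ψ t) ^ 3 - deriv ψ t) / (2 * √(ψ t) ^ 3) := by
    field_simp
    ring
  rw [this]
  exact div_nonneg (by linarith) (by positivity)

theorem le_sq_div_of_deriv_le {lam : ℝ} (hlam0 : 0 ≤ lam) (hψ0 : ψ 0 = lam ^ 2)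
    {t : ℝ} (ht : 0 ≤ t) (hlt : lam * t < 1) : ψ t ≤ lam ^ 2 / (1 - lam * t) ^ 2 := by
  have hlam : 0 < lam := by nlinarith [hψ0 ▸ hpos 0]
  have hsqrt0 : √(ψ 0) = lam := by rw [hψ0, Real.sqrt_sq hlam0]
  have hmono := monotone_inv_sqrt_add_of_deriv_le hψ hpos hsc ht
  simp only [hsqrt0, add_zero] at hmono
  have hden : 0 < 1 - lam * t := by linarith
  have hinv : (1 - lam * t) / lam ≤ (√(ψ t))⁻¹ := by
    rw [sub_div, mul_div_cancel_left₀ _ hlam.ne', one_div]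
    linarith
  have hsqrt : √(ψ t) ≤ lam / (1 - lam * t) := by
    calc √(ψ t) = ((√(ψ t))⁻¹)⁻¹ := (inv_inv _).symm
      _ ≤ ((1 - lam * t) / lam)⁻¹ := inv_anti₀ (div_pos hden hlam) hinv
      _ = lam / (1 - lam * t) := inv_div _ _
  calc ψ t = √(ψ t) ^ 2 := (Real.sq_sqrt (hpos t).le).symm
    _ ≤ (lam / (1 - lam * t)) ^ 2 := pow_le_pow_left₀ (Real.sqrt_nonneg _) hsqrt 2
    _ = lam ^ 2 / (1 - lam * t) ^ 2 := div_pow _ _ _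

end SelfConcordant

section SelfConcordantStep

variable {φ : ℝ → ℝ} (hφ : ContDiff ℝ 3 φ) (hpos : ∀ t, 0 < iteratedDeriv 2 φ t)
  (hsc : ∀ t, iteratedDeriv 3 φ t ≤ 2 * iteratedDeriv 2 φ t ^ ((3 : ℝ) / 2))
  {lam : ℝ} (hlam0 : 0 ≤ lam) (hφ0 : iteratedDeriv 2 φ 0 = lam ^ 2)
include hφ hpos hsc hlam0 hφ0

theorem deriv_le_of_selfConcordant (hlam1 : lam < 1) :
    ∀ t ∈ Set.Icc (0 : ℝ) 1, deriv φ t ≤ deriv φ 0 + lam / (1 - lam * t) - lam := by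
  have hden : ∀ t ∈ Set.Icc (0 : ℝ) 1, 1 - lam * t ≠ 0 := fun t ht => by
    nlinarith [ht.1, ht.2]
  have hd : Differentiable ℝ (deriv φ) := by
    simpa only [iteratedDeriv_one] using hφ.differentiable_iteratedDeriv 1 (by norm_num)
  have hφ'' : ∀ t, HasDerivAt (deriv φ) (iteratedDeriv 2 φ t) t := fun t => by
    rw [iteratedDeriv_succ, iteratedDeriv_one]
    exact (hd t).hasDerivAt
  have hbound : ∀ t ∈ Set.Icc (0 : ℝ) 1, HasDerivAt (fun s => deriv φ 0 + lam / (1 - lam * s) - lam)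
      (lam ^ 2 / (1 - lam * t) ^ 2) t := fun t ht => by
    have h := (hasDerivAt_const t lam).div (((hasDerivAt_id t).const_mul lam).const_sub 1)
      (hden t ht)
    exact ((h.const_add (deriv φ 0)).sub_const lam).congr_deriv (by simp only [id]; ring)
  refine le_of_hasDerivAt_le_of_le (fun t _ => hφ'' t) hbound (by simp) fun t ht => ?_
  have hψ : Differentiable ℝ (iteratedDeriv 2 φ) :=
    hφ.differentiable_iteratedDeriv 2 (by norm_num)
  refine le_sq_div_of_deriv_le hψ hpos (fun s => ?_) hlam0 hφ0 ht.1 (by nlinarith [ht.1, ht.2])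
  simpa only [iteratedDeriv_succ] using hsc s

theorem le_add_deriv_add_of_selfConcordant (hlam1 : lam < 1) :
    φ 1 ≤ φ 0 + deriv φ 0 + lam ^ 2 / (2 * (1 - lam)) := by
  have hden : 0 < 1 - lam := by linarith
  have hφ' : ∀ t, HasDerivAt φ (deriv φ t) t := fun t =>
    ((hφ.differentiable (by norm_num)) t).hasDerivAt
  have hbound : ∀ t, HasDerivAt (fun s => φ 0 + deriv φ 0 * s + lam ^ 2 / (1 - lam) * (s ^ 2 / 2))
      (deriv φ 0 + lam ^ 2 / (1 - lam) * t) t := fun t =>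
    ((((hasDerivAt_id t).const_mul (deriv φ 0)).const_add (φ 0)).add
      (((hasDerivAt_pow 2 t).div_const 2).const_mul (lam ^ 2 / (1 - lam)))).congr_deriv
      (by norm_num)
  have hslope : ∀ t ∈ Set.Icc (0 : ℝ) 1, lam / (1 - lam * t) - lam ≤ lam ^ 2 / (1 - lam) * t :=
    fun t ht => by
      have hdent : 0 < 1 - lam * t := by nlinarith [ht.1, ht.2]
      rw [div_sub' hdent.ne', div_mul_eq_mul_div, div_le_div_iff₀ hdent hden]
      nlinarith [mul_nonneg (mul_nonneg hlam0 hlam0) (mul_nonneg ht.1 (sub_nonneg.2 ht.2))]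
  have h := le_of_hasDerivAt_le_of_le (a := 0) (b := 1) (fun t _ => hφ' t)
    (fun t _ => hbound t) (by simp)
    (fun t ht => by
      have hderiv := deriv_le_of_selfConcordant hφ hpos hsc hlam0 hφ0 hlam1 t
        (Set.Ico_subset_Icc_self ht)
      linarith [hslope t (Set.Ico_subset_Icc_self ht)]) 1 (by simp)
  exact h.trans_eq (by rw [one_pow, mul_one, mul_comm 2, ← div_div]; ring)

theorem armijo_of_selfConcordant {lambar α : ℝ} (hα : 0 < α) (hlam : lam ≤ lambar)
    (hl : lambar ≤ (1 - 2 * α) / 2) (hφ'0 : deriv φ 0 = -lambar ^ 2) :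
    φ 1 ≤ φ 0 - α * lambar ^ 2 := by
  linarith [le_add_deriv_add_of_selfConcordant hφ hpos hsc hlam0 hφ0 (by linarith),
    sq_div_two_mul_one_sub_le hα.le hlam0 hlam hl]

end SelfConcordantStep

theorem stmt10_general {n N : ℕ} (hNn : N < n)
    (f : (Fin n → ℝ) → ℝ) (grad : (Fin n → ℝ) → Fin n → ℝ)
    (hess : (Fin n → ℝ) → Matrix (Fin n) (Fin n) ℝ)
    (hf : ContDiff ℝ 3 f)
    (hgrad : ∀ x u : Fin n → ℝ, deriv (fun t : ℝ => f (x + t • u)) 0 = grad x ⬝ᵥ u)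
    (hhessq : ∀ x u : Fin n → ℝ,
      iteratedDeriv 2 (fun t : ℝ => f (x + t • u)) 0 = u ⬝ᵥ (hess x *ᵥ u))
    (hhpd : ∀ x, (hess x).PosDef)
    (hsc : ∀ x u : Fin n → ℝ, ∀ t : ℝ,
      |iteratedDeriv 3 (fun s : ℝ => f (x + s • u)) t|
        ≤ 2 * iteratedDeriv 2 (fun s : ℝ => f (x + s • u)) t ^ ((3 : ℝ) / 2))
    (x : Fin n → ℝ) (hgx : grad x ≠ 0)
    (σ : Fin n → ℝ) (u : Fin n → Fin n → ℝ)
    (hσpos : ∀ i, 0 < σ i)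
    (hσmono : ∀ i j : Fin n, i ≤ j → σ j ≤ σ i)
    (hortho : ∀ i j : Fin n, u i ⬝ᵥ u j = if i = j then (1 : ℝ) else 0)
    (heig : ∀ i, hess x *ᵥ u i = σ i • u i)
    (Q : Matrix (Fin n) (Fin n) ℝ)
    (hQeig : ∀ i : Fin n, Q *ᵥ u i = (if (i : ℕ) < N then σ i else σ ⟨N, hNn⟩) • u i)
    (lambar : ℝ) (hlambar : lambar = Real.sqrt (grad x ⬝ᵥ (Q⁻¹ *ᵥ grad x)))
    (α : ℝ) (hα0 : 0 < α)
    (hl : lambar ≤ (1 - 2 * α) / 2) :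
    f (x + -(Q⁻¹ *ᵥ grad x)) ≤ f x - α * lambar ^ 2 := by
  have hQ : IsUnit Q := isUnit_of_eigen_ne_zero hortho hQeig fun i => by
    split_ifs <;> exact (hσpos _).ne'
  set d := -(Q⁻¹ *ᵥ grad x) with hd
  have hQd : Q *ᵥ d = -grad x := by rw [hd, mulVec_neg, mulVec_inv_mulVec hQ]
  have hd0 : d ≠ 0 := fun h => hgx (by rw [← neg_neg (grad x), ← hQd, h, mulVec_zero, neg_zero])
  have hdQd : d ⬝ᵥ (Q *ᵥ d) = grad x ⬝ᵥ (Q⁻¹ *ᵥ grad x) := by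
    rw [hQd, hd, dotProduct_neg, neg_dotProduct, neg_neg, dotProduct_comm]
  have hhess : ∀ t, iteratedDeriv 2 (fun s => f (x + s • d)) t
      = d ⬝ᵥ (hess (x + t • d) *ᵥ d) := fun t => by
    rw [iteratedDeriv_comp_line_eq, hhessq]
  have hdAd : 0 < d ⬝ᵥ (hess x *ᵥ d) := by simpa using (hhpd x).dotProduct_mulVec_pos hd0
  have hAQ := dotProduct_mulVec_le_of_eigen_le hortho heig hQeig (le_ite_of_antitone hNn hσmono) d
  have hstep := armijo_of_selfConcordant (φ := fun s => f (x + s • d))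
    (hf.comp (contDiff_const.add (contDiff_id.smul contDiff_const)))
    (fun t => by simpa [hhess] using (hhpd _).dotProduct_mulVec_pos hd0)
    (fun t => (le_abs_self _).trans (hsc x d t)) (Real.sqrt_nonneg _)
    (by rw [hhess, zero_smul, add_zero, Real.sq_sqrt hdAd.le]) hα0
    (by rw [hlambar, ← hdQd]; exact Real.sqrt_le_sqrt hAQ) hl
    (by rw [hgrad, hlambar, ← hdQd, Real.sq_sqrt (by linarith), hdQd, hd, dotProduct_neg])
  simpa only [one_smul, zero_smul, add_zero] using hstep

/-- Let `f` be strictly convex standard self-concordant, `x`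
with `∇f(x) ≠ 0`, `Q` the truncated approximation of `∇²f(x)` with parameter
`N`, `λ̄ = (∇f(x)ᵀ Q⁻¹ ∇f(x))^{1/2}`, `d̂ = −Q⁻¹ ∇f(x)`.  If `α ∈ (0, 1/2)`
and `λ̄ ≤ (1 − 2α)/2`, then the unit step satisfies the Armijo condition
`f(x + d̂) ≤ f(x) − α λ̄²`. -/
theorem stmt10 {n N : ℕ} (hN : 1 ≤ N) (hNn : N < n)
    (f : (Fin n → ℝ) → ℝ) (grad : (Fin n → ℝ) → Fin n → ℝ)
    (hess : (Fin n → ℝ) → Matrix (Fin n) (Fin n) ℝ)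
    (hf : ContDiff ℝ 3 f)
    (hconv : StrictConvexOn ℝ Set.univ f)
    (hgrad : ∀ x u : Fin n → ℝ, deriv (fun t : ℝ => f (x + t • u)) 0 = grad x ⬝ᵥ u)
    (hhessq : ∀ x u : Fin n → ℝ,
      iteratedDeriv 2 (fun t : ℝ => f (x + t • u)) 0 = u ⬝ᵥ (hess x *ᵥ u))
    (hhsymm : ∀ x, (hess x).IsSymm)
    (hhpd : ∀ x, (hess x).PosDef)
    (hsc : ∀ x u : Fin n → ℝ, ∀ t : ℝ,
      |iteratedDeriv 3 (fun s : ℝ => f (x + s • u)) t|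
        ≤ 2 * iteratedDeriv 2 (fun s : ℝ => f (x + s • u)) t ^ ((3 : ℝ) / 2))
    (hclosed : ∀ c : ℝ, IsClosed {x | f x ≤ c})
    (hbdd : BddBelow (Set.range f))
    (x : Fin n → ℝ) (hgx : grad x ≠ 0)
    (σ : Fin n → ℝ) (u : Fin n → Fin n → ℝ)
    (hσpos : ∀ i, 0 < σ i)
    (hσmono : ∀ i j : Fin n, i ≤ j → σ j ≤ σ i)
    (hortho : ∀ i j : Fin n, u i ⬝ᵥ u j = if i = j then (1 : ℝ) else 0)
    (heig : ∀ i, hess x *ᵥ u i = σ i • u i)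
    (Q : Matrix (Fin n) (Fin n) ℝ) (hQsymm : Q.IsSymm)
    (hQeig : ∀ i : Fin n, Q *ᵥ u i = (if (i : ℕ) < N then σ i else σ ⟨N, hNn⟩) • u i)
    (lambar : ℝ) (hlambar : lambar = Real.sqrt (grad x ⬝ᵥ (Q⁻¹ *ᵥ grad x)))
    (α : ℝ) (hα0 : 0 < α) (hα1 : α < 1 / 2)
    (hl : lambar ≤ (1 - 2 * α) / 2) :
    f (x + -(Q⁻¹ *ᵥ grad x)) ≤ f x - α * lambar ^ 2 :=
  stmt10_general hNn f grad hess hf hgrad hhessq hhpd hsc x hgx σ u hσpos hσmono hortho heig Q hQeig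
    lambar hlambar α hα0 hl
end

section
/- Let f be a strictly convex standard self-concordant function on ℝⁿ attaining its minimum at x*. If the Newton decrement satisfies λ(x) < 1, then ω(λ(x)) ≤ f(x) − f(x*) ≤ ω*(λ(x)), where ω(t) := t − log(1 + t) and ω*(t) := −t − log(1 − t). If moreover λ(x) ≤ 0.68, then f(x) − f(x*) ≤ λ(x)². -/
/-!
Restrict `f` to a line: `φ(t) = f(x + t u)`. Self-concordance says exactly that `(φ'')^{-1/2}` is
1-Lipschitz, so with `c = √φ''(0)` one has `c²/(1 + ct)² ≤ φ''(t) ≤ c²/(1 - ct)²` for `0 ≤ t < 1/c`.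
Integrating twice gives `φ(0) + φ'(0) t + ω(ct) ≤ φ(t) ≤ φ(0) + φ'(0) t + ω*(ct)`, where
`ω*(s) = ω(-s)`. On the line from `x` to `x*`, `|φ'(0)| ≤ λ c` and the Fenchel-type inequality
`λ c ≤ ω(c) + ω*(λ)` give `f(x) - f(x*) ≤ ω*(λ)`. Along the damped Newton step
`-(1 + λ)⁻¹ ∇²f(x)⁻¹ ∇f(x)` one has `c = λ/(1 + λ)`, and the upper estimate gives
`f(x*) ≤ f(x) - ω(λ)`. Finally `λ² - ω*(λ)` increases on `[0, 1/2]` and decreases afterwards,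
and is still nonnegative at `0.68`.
-/

open Real Set Matrix

lemma nonneg_of_hasDerivAt_two {F F' F'' : ℝ → ℝ} {T : ℝ} (hT : 0 ≤ T)
    (hF : ∀ t ∈ Icc 0 T, HasDerivAt F (F' t) t) (hF' : ∀ t ∈ Icc 0 T, HasDerivAt F' (F'' t) t)
    (hF'' : ∀ t ∈ Icc 0 T, 0 ≤ F'' t) (h0 : F 0 = 0) (h0' : F' 0 = 0) : 0 ≤ F T := by
  have monotoneOn {G G' : ℝ → ℝ} (hG : ∀ t ∈ Icc 0 T, HasDerivAt G (G' t) t)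
      (hG' : ∀ t ∈ Icc 0 T, 0 ≤ G' t) : MonotoneOn G (Icc 0 T) :=
    monotoneOn_of_hasDerivWithinAt_nonneg (convex_Icc 0 T)
      (fun t ht => (hG t ht).continuousAt.continuousWithinAt)
      (fun t ht => (hG t (interior_subset ht)).hasDerivWithinAt)
      (fun t ht => hG' t (interior_subset ht))
  have h0T : (0 : ℝ) ∈ Icc 0 T := ⟨le_rfl, hT⟩
  have hF'_nonneg (t : ℝ) (ht : t ∈ Icc 0 T) : 0 ≤ F' t :=
    h0' ▸ monotoneOn hF' hF'' h0T ht ht.1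
  exact h0 ▸ monotoneOn hF hF'_nonneg h0T ⟨hT, le_rfl⟩ hT

/-- The paper's `ω`; its `ω*(t) = -t - log (1 - t)` is `omega (-t)`. -/
noncomputable def omega (t : ℝ) : ℝ := t - log (1 + t)

lemma hasDerivAt_omega_mul (a : ℝ) {t : ℝ} (ht : 0 < 1 + a * t) :
    HasDerivAt (fun s => omega (a * s)) (a ^ 2 * t / (1 + a * t)) t := by
  have hlin : HasDerivAt (fun s => a * s) a t := by simpa using (hasDerivAt_id t).const_mul a
  refine (hlin.sub ((hlin.const_add 1).log ht.ne')).congr_deriv ?_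
  field_simp
  ring

lemma hasDerivAt_sq_mul_div (a : ℝ) {t : ℝ} (ht : 1 + a * t ≠ 0) :
    HasDerivAt (fun s => a ^ 2 * s / (1 + a * s)) (a ^ 2 / (1 + a * t) ^ 2) t := by
  have hlin : HasDerivAt (fun s => a * s) a t := by simpa using (hasDerivAt_id t).const_mul a
  refine (((hasDerivAt_id' t).const_mul (a ^ 2)).div (hlin.const_add 1) ht).congr_deriv ?_
  field_simp
  ring

lemma mul_le_omega_add_omega_neg {s t : ℝ} (hs : -1 < s) (ht : t < 1) :
    s * t ≤ omega s + omega (-t) := by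
  have h := log_le_sub_one_of_pos (mul_pos (by linarith : 0 < 1 + s) (by linarith : 0 < 1 - t))
  rw [log_mul (by linarith) (by linarith)] at h
  simp only [omega, ← sub_eq_add_neg]
  nlinarith

lemma omega_neg_div_one_add {t : ℝ} (ht : -1 < t) :
    omega (-(t / (1 + t))) - t ^ 2 / (1 + t) = -omega t := by
  have hne : 1 + t ≠ 0 := by linarith
  have h1 : 1 + -(t / (1 + t)) = (1 + t)⁻¹ := by field_simp; ring
  rw [omega, omega, h1, log_inv]
  field_simp
  ring

lemma omega_nonneg {t : ℝ} (ht : -1 < t) : 0 ≤ omega t := by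
  have := log_le_sub_one_of_pos (by linarith : 0 < 1 + t)
  simp only [omega]
  linarith

lemma omega_neg_068_le_sq : omega (-0.68) ≤ 0.68 ^ 2 := by
  have hexp : (3.125 : ℝ) ≤ exp 1.1424 := by
    have h1 := exp_one_gt_d9
    have h2 := quadratic_le_exp_of_nonneg (by norm_num : (0 : ℝ) ≤ 0.1424)
    have h3 : exp 1.1424 = exp 1 * exp 0.1424 := by rw [← exp_add]; norm_num
    nlinarith [exp_pos 1]
  have hlog : -1.1424 ≤ log (1 + -0.68) := by
    rw [le_log_iff_exp_le (by norm_num), exp_neg, inv_le_comm₀ (exp_pos _) (by norm_num)]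
    norm_num at hexp ⊢
    exact hexp
  simp only [omega]
  norm_num at hlog ⊢
  linarith

lemma hasDerivAt_sq_sub_omega_neg {t : ℝ} (ht : t < 1) :
    HasDerivAt (fun s => s ^ 2 - omega (-s)) (t * (1 - 2 * t) / (1 - t)) t := by
  have hne : 1 - t ≠ 0 := by linarith
  have h := ((hasDerivAt_pow 2 t).sub ((hasDerivAt_neg t).sub
    (((hasDerivAt_neg t).const_add 1).log (by simpa [← sub_eq_add_neg] using hne))))
  refine h.congr_deriv ?_
  rw [← sub_eq_add_neg]
  field_simp
  ring

lemma omega_neg_le_sq {t : ℝ} (ht0 : 0 ≤ t) (ht : t ≤ 0.68) : omega (-t) ≤ t ^ 2 := by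
  set F := fun s : ℝ => s ^ 2 - omega (-s)
  have hF : ∀ s ∈ Icc (0 : ℝ) 0.68, HasDerivAt F (s * (1 - 2 * s) / (1 - s)) s :=
    fun s hs => hasDerivAt_sq_sub_omega_neg (by linarith [hs.2])
  have hsub₁ : Icc (0 : ℝ) (1 / 2) ⊆ Icc 0 0.68 := Icc_subset_Icc le_rfl (by norm_num)
  have hsub₂ : Icc (1 / 2 : ℝ) 0.68 ⊆ Icc 0 0.68 := Icc_subset_Icc (by norm_num) le_rfl
  suffices 0 ≤ F t by simpa [F] using this
  rcases le_total t (1 / 2) with hhalf | hhalf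
  · have hmono : MonotoneOn F (Icc 0 (1 / 2)) :=
      monotoneOn_of_hasDerivWithinAt_nonneg (convex_Icc _ _)
        (fun s hs => (hF s (hsub₁ hs)).continuousAt.continuousWithinAt)
        (fun s hs => (hF s (hsub₁ (interior_subset hs))).hasDerivWithinAt)
        (fun s hs => by
          rw [interior_Icc] at hs
          exact div_nonneg (mul_nonneg hs.1.le (by linarith [hs.2])) (by linarith [hs.2]))
    simpa [F, omega] using hmono ⟨le_rfl, by norm_num⟩ ⟨ht0, hhalf⟩ ht0
  · have hanti : AntitoneOn F (Icc (1 / 2) 0.68) :=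
      antitoneOn_of_hasDerivWithinAt_nonpos (convex_Icc _ _)
        (fun s hs => (hF s (hsub₂ hs)).continuousAt.continuousWithinAt)
        (fun s hs => (hF s (hsub₂ (interior_subset hs))).hasDerivWithinAt)
        (fun s hs => by
          rw [interior_Icc] at hs
          exact div_nonpos_of_nonpos_of_nonneg
            (mul_nonpos_of_nonneg_of_nonpos (by linarith [hs.1]) (by linarith [hs.1]))
            (by linarith [hs.2]))
    have := hanti ⟨hhalf, ht⟩ ⟨by norm_num, le_rfl⟩ ht
    simp only [F] at this ⊢
    linarith [omega_neg_068_le_sq]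

structure IsSelfConcordant (φ : ℝ → ℝ) : Prop where
  contDiff : ContDiff ℝ 3 φ
  iteratedDeriv_two_pos : ∀ t, 0 < iteratedDeriv 2 φ t
  abs_iteratedDeriv_three_le :
    ∀ t, |iteratedDeriv 3 φ t| ≤ 2 * iteratedDeriv 2 φ t ^ ((3 : ℝ) / 2)

namespace IsSelfConcordant

variable {φ : ℝ → ℝ}

lemma hasDerivAt_iteratedDeriv (h : IsSelfConcordant φ) {k : ℕ} (hk : k < 3) (t : ℝ) :
    HasDerivAt (iteratedDeriv k φ) (iteratedDeriv (k + 1) φ t) t := by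
  rw [iteratedDeriv_succ]
  exact (h.contDiff.differentiable_iteratedDeriv k (by exact_mod_cast hk) t).hasDerivAt

lemma lipschitzWith_inv_sqrt (h : IsSelfConcordant φ) :
    LipschitzWith 1 fun t => (√(iteratedDeriv 2 φ t))⁻¹ := by
  have hψ (t : ℝ) : HasDerivAt (fun t => (√(iteratedDeriv 2 φ t))⁻¹)
      (-(iteratedDeriv 3 φ t / (2 * √(iteratedDeriv 2 φ t))) / √(iteratedDeriv 2 φ t) ^ 2) t :=
    ((h.hasDerivAt_iteratedDeriv (by norm_num) t).sqrt (h.iteratedDeriv_two_pos t).ne').inv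
      (sqrt_pos.2 (h.iteratedDeriv_two_pos t)).ne'
  refine lipschitzWith_of_nnnorm_deriv_le (fun t => (hψ t).differentiableAt) fun t => ?_
  have hA := h.iteratedDeriv_two_pos t
  have hsc := h.abs_iteratedDeriv_three_le t
  rw [rpow_div_two_eq_sqrt _ hA.le, show (3 : ℝ) = (3 : ℕ) by norm_num, rpow_natCast] at hsc
  have hs := sqrt_pos.2 hA
  rw [(hψ t).deriv, ← NNReal.coe_le_coe, coe_nnnorm, norm_eq_abs, NNReal.coe_one, abs_div,
    abs_neg, abs_div, abs_of_pos (by positivity : 0 < 2 * √(iteratedDeriv 2 φ t)),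
    abs_of_pos (by positivity : 0 < √(iteratedDeriv 2 φ t) ^ 2), div_div,
    div_le_one (by positivity)]
  linarith

lemma inv_sqrt_sub_le (h : IsSelfConcordant φ) (t : ℝ) :
    |(√(iteratedDeriv 2 φ t))⁻¹ - (√(iteratedDeriv 2 φ 0))⁻¹| ≤ |t| := by
  simpa [Real.dist_eq] using h.lipschitzWith_inv_sqrt.dist_le_mul t 0

lemma div_sq_le_iteratedDeriv_two (h : IsSelfConcordant φ) {t : ℝ} (ht : 0 ≤ t) :
    iteratedDeriv 2 φ 0 / (1 + √(iteratedDeriv 2 φ 0) * t) ^ 2 ≤ iteratedDeriv 2 φ t := by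
  have hA := h.iteratedDeriv_two_pos
  set c := √(iteratedDeriv 2 φ 0)
  set s := √(iteratedDeriv 2 φ t)
  have hc : 0 < c := sqrt_pos.2 (hA 0)
  have hψ : s⁻¹ ≤ ((1 + c * t) / c) := by
    have := (abs_le.1 (h.inv_sqrt_sub_le t)).2
    rw [abs_of_nonneg ht] at this
    rw [add_div, one_div, mul_div_cancel_left₀ _ hc.ne']
    linarith
  rw [inv_le_comm₀ (sqrt_pos.2 (hA t)) (by positivity), inv_div] at hψ
  rw [← sq_sqrt (hA 0).le, ← sq_sqrt (hA t).le, ← div_pow]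
  exact pow_le_pow_left₀ (by positivity) hψ 2

lemma iteratedDeriv_two_le_div_sq (h : IsSelfConcordant φ) {t : ℝ} (ht : 0 ≤ t)
    (hct : √(iteratedDeriv 2 φ 0) * t < 1) :
    iteratedDeriv 2 φ t ≤ iteratedDeriv 2 φ 0 / (1 - √(iteratedDeriv 2 φ 0) * t) ^ 2 := by
  have hA := h.iteratedDeriv_two_pos
  set c := √(iteratedDeriv 2 φ 0)
  set s := √(iteratedDeriv 2 φ t)
  have hc : 0 < c := sqrt_pos.2 (hA 0)
  have hψ : (1 - c * t) / c ≤ s⁻¹ := by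
    have := (abs_le.1 (h.inv_sqrt_sub_le t)).1
    rw [abs_of_nonneg ht] at this
    rw [sub_div, one_div, mul_div_cancel_left₀ _ hc.ne']
    linarith
  rw [le_inv_comm₀ (div_pos (by linarith) hc) (sqrt_pos.2 (hA t)), inv_div] at hψ
  rw [← sq_sqrt (hA 0).le, ← sq_sqrt (hA t).le, ← div_pow]
  exact pow_le_pow_left₀ (sqrt_nonneg _) hψ 2

lemma hasDerivAt (h : IsSelfConcordant φ) (t : ℝ) : HasDerivAt φ (deriv φ t) t :=
  (h.contDiff.differentiable (by norm_num) t).hasDerivAt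

lemma hasDerivAt_deriv (h : IsSelfConcordant φ) (t : ℝ) :
    HasDerivAt (deriv φ) (iteratedDeriv 2 φ t) t := by
  simpa using h.hasDerivAt_iteratedDeriv (k := 1) (by norm_num) t

lemma omega_le (h : IsSelfConcordant φ) {t : ℝ} (ht : 0 ≤ t) :
    φ 0 + deriv φ 0 * t + omega (√(iteratedDeriv 2 φ 0) * t) ≤ φ t := by
  set c := √(iteratedDeriv 2 φ 0)
  have hc2 : c ^ 2 = iteratedDeriv 2 φ 0 := sq_sqrt (h.iteratedDeriv_two_pos 0).le
  have hpos (s : ℝ) (hs : s ∈ Icc 0 t) : 0 < 1 + c * s := by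
    nlinarith [sqrt_nonneg (iteratedDeriv 2 φ 0), hs.1]
  have key := nonneg_of_hasDerivAt_two (F := fun s => φ s - φ 0 - deriv φ 0 * s - omega (c * s))
    (F' := fun s => deriv φ s - deriv φ 0 - c ^ 2 * s / (1 + c * s))
    (F'' := fun s => iteratedDeriv 2 φ s - c ^ 2 / (1 + c * s) ^ 2) ht
    (fun s hs => (((h.hasDerivAt s).sub_const _).sub ((hasDerivAt_id' s).const_mul _)).sub
      (hasDerivAt_omega_mul c (hpos s hs)) |>.congr_deriv (by ring))
    (fun s hs => ((h.hasDerivAt_deriv s).sub_const _).sub (hasDerivAt_sq_mul_div c (hpos s hs).ne'))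
    (fun s hs => sub_nonneg.2 (by rw [hc2]; exact h.div_sq_le_iteratedDeriv_two hs.1))
    (by simp [omega]) (by simp)
  linarith

lemma le_omega_neg (h : IsSelfConcordant φ) {t : ℝ} (ht : 0 ≤ t)
    (hct : √(iteratedDeriv 2 φ 0) * t < 1) :
    φ t ≤ φ 0 + deriv φ 0 * t + omega (-(√(iteratedDeriv 2 φ 0) * t)) := by
  set c := √(iteratedDeriv 2 φ 0)
  have hc2 : (-c) ^ 2 = iteratedDeriv 2 φ 0 := by
    rw [neg_sq, sq_sqrt (h.iteratedDeriv_two_pos 0).le]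
  have hpos (s : ℝ) (hs : s ∈ Icc 0 t) : 0 < 1 + -c * s := by
    nlinarith [sqrt_nonneg (iteratedDeriv 2 φ 0), hs.1, hs.2]
  have key := nonneg_of_hasDerivAt_two
    (F := fun s => φ 0 + deriv φ 0 * s + omega (-c * s) - φ s)
    (F' := fun s => deriv φ 0 + (-c) ^ 2 * s / (1 + -c * s) - deriv φ s)
    (F'' := fun s => (-c) ^ 2 / (1 + -c * s) ^ 2 - iteratedDeriv 2 φ s) ht
    (fun s hs => ((((hasDerivAt_id' s).const_mul _).const_add _).add
      (hasDerivAt_omega_mul (-c) (hpos s hs))).sub (h.hasDerivAt s) |>.congr_deriv (by ring))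
    (fun s hs => ((hasDerivAt_sq_mul_div (-c) (hpos s hs).ne').const_add _).sub
      (h.hasDerivAt_deriv s))
    (fun s hs => sub_nonneg.2 (by
      rw [hc2, neg_mul, ← sub_eq_add_neg]
      exact h.iteratedDeriv_two_le_div_sq hs.1
        ((mul_le_mul_of_nonneg_left hs.2 (sqrt_nonneg _)).trans_lt hct)))
    (by simp [omega]) (by simp)
  simp only [neg_mul] at key
  linarith

end IsSelfConcordant

section Line

variable {E : Type*} [NormedAddCommGroup E] [NormedSpace ℝ E]

lemma iteratedDeriv_line (f : E → ℝ) (x u : E) (k : ℕ) (t : ℝ) :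
    iteratedDeriv k (fun s : ℝ => f (x + s • u)) t =
      iteratedDeriv k (fun s : ℝ => f ((x + t • u) + s • u)) 0 := by
  have h := congrFun (iteratedDeriv_comp_add_const (n := k) (f := fun s : ℝ => f (x + s • u)) t) 0
  simp only [zero_add] at h
  rw [← h]
  congr 1
  funext s
  rw [add_smul, add_comm (s • u), add_assoc]

lemma isSelfConcordant_line {f : E → ℝ} {x u : E} (hf : ContDiff ℝ 3 f)
    (hpos : ∀ y, 0 < iteratedDeriv 2 (fun s : ℝ => f (y + s • u)) 0)
    (hsc : ∀ t, |iteratedDeriv 3 (fun s : ℝ => f (x + s • u)) t|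
      ≤ 2 * iteratedDeriv 2 (fun s : ℝ => f (x + s • u)) t ^ ((3 : ℝ) / 2)) :
    IsSelfConcordant fun t : ℝ => f (x + t • u) where
  contDiff := hf.comp (contDiff_const.add (contDiff_id.smul contDiff_const))
  iteratedDeriv_two_pos t := iteratedDeriv_line f x u 2 t ▸ hpos _
  abs_iteratedDeriv_three_le := hsc

end Line

section NewtonDecrement

variable {ι : Type*} [Fintype ι] {H : Matrix ι ι ℝ}

lemma Matrix.IsHermitian.dotProduct_mulVec_comm (hH : H.IsHermitian) (v w : ι → ℝ) :
    v ⬝ᵥ (H *ᵥ w) = w ⬝ᵥ (H *ᵥ v) := by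
  have hT : Hᵀ = H := by simpa [conjTranspose_eq_transpose_of_trivial] using hH.eq
  rw [dotProduct_mulVec, ← mulVec_transpose, hT, dotProduct_comm]

variable [DecidableEq ι]

noncomputable def newtonDecrement (H : Matrix ι ι ℝ) (g : ι → ℝ) : ℝ := √(g ⬝ᵥ (H⁻¹ *ᵥ g))

lemma newtonDecrement_nonneg (H : Matrix ι ι ℝ) (g : ι → ℝ) : 0 ≤ newtonDecrement H g :=
  sqrt_nonneg _

lemma Matrix.mulVec_inv_mulVec (hH : IsUnit H.det) (g : ι → ℝ) : H *ᵥ (H⁻¹ *ᵥ g) = g := by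
  rw [mulVec_mulVec, mul_nonsing_inv _ hH, one_mulVec]

lemma newtonDecrement_sq (hH : H.PosDef) (g : ι → ℝ) :
    newtonDecrement H g ^ 2 = g ⬝ᵥ (H⁻¹ *ᵥ g) :=
  sq_sqrt (by simpa using hH.posSemidef.inv.dotProduct_mulVec_nonneg g)

lemma newtonDecrement_sq_eq_dotProduct_mulVec (hH : H.PosDef) (g : ι → ℝ) :
    newtonDecrement H g ^ 2 = (H⁻¹ *ᵥ g) ⬝ᵥ (H *ᵥ (H⁻¹ *ᵥ g)) := by
  rw [mulVec_inv_mulVec hH.det_pos.ne'.isUnit, dotProduct_comm, newtonDecrement_sq hH]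

/-- Cauchy–Schwarz for the form `H`, applied to `H⁻¹ g` and `u`. -/
lemma abs_dotProduct_le_newtonDecrement_mul (hH : H.PosDef) (g u : ι → ℝ) :
    |g ⬝ᵥ u| ≤ newtonDecrement H g * √(u ⬝ᵥ (H *ᵥ u)) := by
  have hCS := (toBilin' H).apply_mul_apply_le_of_forall_zero_le
    (fun v => by simpa [toBilin'_apply'] using hH.posSemidef.dotProduct_mulVec_nonneg v)
    (H⁻¹ *ᵥ g) u
  simp only [toBilin'_apply'] at hCS
  rw [hH.isHermitian.dotProduct_mulVec_comm _ u, mulVec_inv_mulVec hH.det_pos.ne'.isUnit,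
    dotProduct_comm u, dotProduct_comm _ g, ← newtonDecrement_sq hH, ← sq] at hCS
  rw [← sqrt_sq_eq_abs, ← sqrt_sq (newtonDecrement_nonneg H g), ← sqrt_mul (sq_nonneg _)]
  exact sqrt_le_sqrt hCS

lemma sub_omega_neg_newtonDecrement_le (f : (ι → ℝ) → ℝ) (x g : ι → ℝ) (hH : H.PosDef)
    (hline : ∀ u ≠ 0, IsSelfConcordant fun t : ℝ => f (x + t • u))
    (hg : ∀ u, deriv (fun t : ℝ => f (x + t • u)) 0 = g ⬝ᵥ u)
    (hH2 : ∀ u, iteratedDeriv 2 (fun t : ℝ => f (x + t • u)) 0 = u ⬝ᵥ (H *ᵥ u))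
    (hlt : newtonDecrement H g < 1) (y : ι → ℝ) :
    f x - omega (-newtonDecrement H g) ≤ f y := by
  obtain rfl | hyx := eq_or_ne y x
  · linarith [omega_nonneg (by linarith : -1 < -newtonDecrement H g)]
  have hlow := (hline (y - x) (sub_ne_zero.2 hyx)).omega_le zero_le_one
  simp only [hH2, hg, zero_smul, one_smul, add_zero, mul_one, add_sub_cancel] at hlow
  have hCS := abs_dotProduct_le_newtonDecrement_mul hH g (y - x)
  have hFenchel := mul_le_omega_add_omega_neg
    (by linarith [sqrt_nonneg ((y - x) ⬝ᵥ (H *ᵥ (y - x)))]) hlt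
  linarith [neg_abs_le (g ⬝ᵥ (y - x))]

lemma le_sub_omega_newtonDecrement (f : (ι → ℝ) → ℝ) (x g : ι → ℝ) (hH : H.PosDef)
    (hline : ∀ u ≠ 0, IsSelfConcordant fun t : ℝ => f (x + t • u))
    (hg : ∀ u, deriv (fun t : ℝ => f (x + t • u)) 0 = g ⬝ᵥ u)
    (hH2 : ∀ u, iteratedDeriv 2 (fun t : ℝ => f (x + t • u)) 0 = u ⬝ᵥ (H *ᵥ u)) :
    f (x - (1 + newtonDecrement H g)⁻¹ • (H⁻¹ *ᵥ g)) ≤ f x - omega (newtonDecrement H g) := by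
  set l := newtonDecrement H g
  set w := H⁻¹ *ᵥ g
  have hl0 : 0 ≤ l := newtonDecrement_nonneg H g
  have hwHw : w ⬝ᵥ (H *ᵥ w) = l ^ 2 := (newtonDecrement_sq_eq_dotProduct_mulVec hH g).symm
  have hgw : g ⬝ᵥ w = l ^ 2 := (newtonDecrement_sq hH g).symm
  obtain hw | hw := eq_or_ne w 0
  · have hl : l = 0 := by simpa [hw] using hwHw.symm
    simp [hw, hl, omega]
  have h1l : 0 < 1 + l := by linarith
  set u := -(1 + l)⁻¹ • w
  have hu : u ≠ 0 := smul_ne_zero (neg_ne_zero.2 (inv_ne_zero h1l.ne')) hw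
  have hxu : x + u = x - (1 + l)⁻¹ • w := by rw [sub_eq_add_neg, ← neg_smul]
  have hc : √(iteratedDeriv 2 (fun t : ℝ => f (x + t • u)) 0) = l / (1 + l) := by
    rw [hH2, mulVec_smul, smul_dotProduct, dotProduct_smul, hwHw, smul_eq_mul, smul_eq_mul,
      ← mul_assoc, ← sq, neg_sq, ← mul_pow, sqrt_sq (mul_nonneg (inv_nonneg.2 h1l.le) hl0),
      inv_mul_eq_div]
  have hup := (hline u hu).le_omega_neg zero_le_one (by
    rw [hc, mul_one, div_lt_one (by positivity)]
    linarith)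
  rw [hc, hg, mul_one, mul_one, dotProduct_smul, hgw, one_smul, zero_smul, add_zero,
    smul_eq_mul, neg_mul, inv_mul_eq_div, hxu] at hup
  linarith [omega_neg_div_one_add (by linarith : -1 < l)]

end NewtonDecrement

theorem stmt15_general {n : ℕ}
    (f : (Fin n → ℝ) → ℝ) (grad : (Fin n → ℝ) → Fin n → ℝ)
    (hess : (Fin n → ℝ) → Matrix (Fin n) (Fin n) ℝ)
    (hf : ContDiff ℝ 3 f)
    (hgrad : ∀ x u : Fin n → ℝ, deriv (fun t : ℝ => f (x + t • u)) 0 = grad x ⬝ᵥ u)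
    (hhessq : ∀ x u : Fin n → ℝ,
      iteratedDeriv 2 (fun t : ℝ => f (x + t • u)) 0 = u ⬝ᵥ (hess x *ᵥ u))
    (hhpd : ∀ x, (hess x).PosDef)
    (hsc : ∀ x u : Fin n → ℝ, ∀ t : ℝ,
      |iteratedDeriv 3 (fun s : ℝ => f (x + s • u)) t|
        ≤ 2 * iteratedDeriv 2 (fun s : ℝ => f (x + s • u)) t ^ ((3 : ℝ) / 2))
    (xstar : Fin n → ℝ) (hmin : ∀ y, f xstar ≤ f y)
    (x : Fin n → ℝ)
    (lam : ℝ) (hlam : lam = Real.sqrt (grad x ⬝ᵥ ((hess x)⁻¹ *ᵥ grad x)))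
    (hlam1 : lam < 1) :
    lam - Real.log (1 + lam) ≤ f x - f xstar ∧
    f x - f xstar ≤ -lam - Real.log (1 - lam) ∧
    (lam ≤ 0.68 → f x - f xstar ≤ lam ^ 2) := by
  have hline (u : Fin n → ℝ) (hu : u ≠ 0) : IsSelfConcordant fun t : ℝ => f (x + t • u) :=
    isSelfConcordant_line hf
      (fun y => by simpa [hhessq] using (hhpd y).dotProduct_mulVec_pos hu) (hsc x u)
  change lam = newtonDecrement (hess x) (grad x) at hlam
  have hdamped := le_sub_omega_newtonDecrement f x (grad x) (hhpd x) hline (hgrad x) (hhessq x)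
  have hupper := sub_omega_neg_newtonDecrement_le f x (grad x) (hhpd x) hline (hgrad x)
    (hhessq x) (hlam ▸ hlam1) xstar
  rw [← hlam] at hdamped hupper
  have hgap_ge : omega lam ≤ f x - f xstar := by
    linarith [hmin (x - (1 + lam)⁻¹ • ((hess x)⁻¹ *ᵥ grad x))]
  have hgap_le : f x - f xstar ≤ omega (-lam) := by linarith
  refine ⟨hgap_ge, by rwa [omega, ← sub_eq_add_neg] at hgap_le, fun h68 => ?_⟩
  exact hgap_le.trans (omega_neg_le_sq (hlam ▸ newtonDecrement_nonneg _ _) h68)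

/-- Let `f` be a strictly convex standard self-concordant
function attaining its minimum at `x*`.  If the Newton decrement satisfies
`λ(x) < 1`, then `ω(λ(x)) ≤ f(x) − f(x*) ≤ ω*(λ(x))` with
`ω(t) = t − log(1+t)` and `ω*(t) = −t − log(1−t)`; if moreover `λ(x) ≤ 0.68`
then `f(x) − f(x*) ≤ λ(x)²`. -/
theorem stmt15 {n : ℕ}
    (f : (Fin n → ℝ) → ℝ) (grad : (Fin n → ℝ) → Fin n → ℝ)
    (hess : (Fin n → ℝ) → Matrix (Fin n) (Fin n) ℝ)
    (hf : ContDiff ℝ 3 f)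
    (hconv : StrictConvexOn ℝ Set.univ f)
    (hgrad : ∀ x u : Fin n → ℝ, deriv (fun t : ℝ => f (x + t • u)) 0 = grad x ⬝ᵥ u)
    (hhessq : ∀ x u : Fin n → ℝ,
      iteratedDeriv 2 (fun t : ℝ => f (x + t • u)) 0 = u ⬝ᵥ (hess x *ᵥ u))
    (hhsymm : ∀ x, (hess x).IsSymm)
    (hhpd : ∀ x, (hess x).PosDef)
    (hsc : ∀ x u : Fin n → ℝ, ∀ t : ℝ,
      |iteratedDeriv 3 (fun s : ℝ => f (x + s • u)) t|
        ≤ 2 * iteratedDeriv 2 (fun s : ℝ => f (x + s • u)) t ^ ((3 : ℝ) / 2))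
    (hclosed : ∀ c : ℝ, IsClosed {x | f x ≤ c})
    (hbdd : BddBelow (Set.range f))
    (xstar : Fin n → ℝ) (hmin : ∀ y, f xstar ≤ f y)
    (x : Fin n → ℝ)
    (lam : ℝ) (hlam : lam = Real.sqrt (grad x ⬝ᵥ ((hess x)⁻¹ *ᵥ grad x)))
    (hlam1 : lam < 1) :
    lam - Real.log (1 + lam) ≤ f x - f xstar ∧
    f x - f xstar ≤ -lam - Real.log (1 - lam) ∧
    (lam ≤ 0.68 → f x - f xstar ≤ lam ^ 2) :=
  stmt15_general f grad hess hf hgrad hhessq hhpd hsc xstar hmin x lam hlam hlam1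
end

section
/- Let f be a strictly convex standard self-concordant function on ℝⁿ, x a point, H := ∇²f(x), P an n×N matrix of full column rank, H_r := Pᵀ H P, and Q the coarse truncated approximation of H_r with parameter p. Let λ̂ := (∇f(x)ᵀ P Q⁻¹ Pᵀ ∇f(x))^{1/2} > 0, d̂ := −P Q⁻¹ Pᵀ ∇f(x), and t := 1/(1 + λ̂). Then f(x + t d̂) − f(x) ≤ −ω(λ̂) = −(λ̂ − log(1 + λ̂)). -/
/-!
Restrict `f` to the line `t ↦ x + t d̂` and call the restriction `φ`. Self-concordance makes
`t ↦ φ''(t)^(-1/2) + t` nondecreasing, so `φ''(t) ≤ (r / (1 - r t))²` with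
`r = √φ''(0)`; integrating twice gives `φ(t) ≤ φ(0) + φ'(0) t - r t - log (1 - r t)`.
Here `φ'(0) = -λ̂²`. The truncation `Q` only raises eigenvalues of `H_r`, so `H_r ≤ Q` in the
Loewner order, whence `r² = d̂ᵀ H d̂ = wᵀ H_r w ≤ wᵀ Q w = λ̂²` for `w = Q⁻¹ Pᵀ ∇f(x)`. As
`s ↦ -s - log (1 - s)` increases on `[0, 1)`, the bound is largest at `r = λ̂`, where for
`t = 1/(1 + λ̂)` it equals `-ω(λ̂)`.
-/

open Matrix Set

namespace Matrix

variable {m : Type*} [Fintype m] [DecidableEq m]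

theorem mul_transpose_self_of_orthonormal {u : m → m → ℝ}
    (hu : ∀ i j, u i ⬝ᵥ u j = if i = j then (1 : ℝ) else 0) :
    of u * (of u)ᵀ = 1 := by
  ext i j
  simpa [mul_apply, one_apply, dotProduct] using hu i j

theorem eq_transpose_mul_diagonal_mul_of_orthonormal {A : Matrix m m ℝ} {u : m → m → ℝ}
    {d : m → ℝ} (hu : ∀ i j, u i ⬝ᵥ u j = if i = j then (1 : ℝ) else 0)
    (hA : ∀ i, A *ᵥ u i = d i • u i) :
    A = (of u)ᵀ * diagonal d * of u := by
  have hAV : A * (of u)ᵀ = (of u)ᵀ * diagonal d := by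
    ext k i
    rw [mul_diagonal]
    simpa [mul_apply, mulVec, dotProduct, mul_comm] using congrFun (hA i) k
  calc A = A * ((of u)ᵀ * of u) := by
        rw [mul_eq_one_comm.mp (mul_transpose_self_of_orthonormal hu), mul_one]
    _ = (of u)ᵀ * diagonal d * of u := by rw [← Matrix.mul_assoc, hAV]

theorem posSemidef_sub_of_orthonormal_eigenvectors {A B : Matrix m m ℝ} {u : m → m → ℝ}
    {a b : m → ℝ} (hu : ∀ i j, u i ⬝ᵥ u j = if i = j then (1 : ℝ) else 0)
    (hA : ∀ i, A *ᵥ u i = a i • u i) (hB : ∀ i, B *ᵥ u i = b i • u i) (hab : a ≤ b) :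
    (B - A).PosSemidef := by
  have hBA : B - A = (of u)ᴴ * diagonal (fun i => b i - a i) * of u := by
    rw [conjTranspose_eq_transpose_of_trivial, ← diagonal_sub, Matrix.mul_sub, Matrix.sub_mul,
      ← eq_transpose_mul_diagonal_mul_of_orthonormal hu hA,
      ← eq_transpose_mul_diagonal_mul_of_orthonormal hu hB]
  rw [hBA]
  exact (posSemidef_diagonal_iff.mpr fun i => sub_nonneg.mpr (hab i)).conjTranspose_mul_mul_same
    (of u)

theorem isUnit_det_of_orthonormal_eigenvectors {A : Matrix m m ℝ} {u : m → m → ℝ}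
    {a : m → ℝ} (hu : ∀ i j, u i ⬝ᵥ u j = if i = j then (1 : ℝ) else 0)
    (hA : ∀ i, A *ᵥ u i = a i • u i) (ha : ∀ i, a i ≠ 0) :
    IsUnit A.det := by
  have hV : (of u).det * (of u)ᵀ.det = 1 := by
    rw [← det_mul, mul_transpose_self_of_orthonormal hu, det_one]
  rw [eq_transpose_mul_diagonal_mul_of_orthonormal hu hA, det_mul, det_mul, det_diagonal,
    isUnit_iff_ne_zero]
  exact mul_ne_zero (mul_ne_zero (right_ne_zero_of_mul_eq_one hV)
    (Finset.prod_ne_zero_iff.mpr fun i _ => ha i)) (left_ne_zero_of_mul_eq_one hV)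

theorem dotProduct_mulVec_le_of_posSemidef_sub {n : Type*} [Fintype n]
    {H : Matrix n n ℝ} {P : Matrix n m ℝ} {Q : Matrix m m ℝ} (hQ : IsUnit Q.det)
    (hPQ : (Q - Pᵀ * H * P).PosSemidef) (g : n → ℝ) :
    (P *ᵥ (Q⁻¹ *ᵥ (Pᵀ *ᵥ g))) ⬝ᵥ (H *ᵥ (P *ᵥ (Q⁻¹ *ᵥ (Pᵀ *ᵥ g))))
      ≤ g ⬝ᵥ (P *ᵥ (Q⁻¹ *ᵥ (Pᵀ *ᵥ g))) := by
  set w := Q⁻¹ *ᵥ (Pᵀ *ᵥ g)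
  have hQw : Q *ᵥ w = Pᵀ *ᵥ g := by rw [mulVec_mulVec, mul_nonsing_inv _ hQ, one_mulVec]
  have h := hPQ.dotProduct_mulVec_nonneg w
  rwa [star_trivial, sub_mulVec, dotProduct_sub, sub_nonneg, hQw, ← mulVec_mulVec,
    ← mulVec_mulVec, dotProduct_transpose_mulVec, dotProduct_transpose_mulVec,
    dotProduct_comm] at h

end Matrix

/-- Indices start at `0`: `coarseTruncation σ ⟨p, _⟩` is the paper's spectrum
`σ_1, …, σ_p, σ_{p+1}, …, σ_{p+1}`. -/
def coarseTruncation {ι : Type*} [LinearOrder ι] (σ : ι → ℝ) (k : ι) (i : ι) : ℝ :=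
  if i < k then σ i else σ k

theorem le_coarseTruncation {ι : Type*} [LinearOrder ι] {σ : ι → ℝ} (hσ : Antitone σ)
    (k : ι) : σ ≤ coarseTruncation σ k := fun i => by
  unfold coarseTruncation
  split_ifs with h
  · exact le_rfl
  · exact hσ (not_lt.mp h)

theorem coarseTruncation_pos {ι : Type*} [LinearOrder ι] {σ : ι → ℝ} (hσ : ∀ i, 0 < σ i)
    (k i : ι) : 0 < coarseTruncation σ k i := by
  unfold coarseTruncation
  split_ifs <;> exact hσ _

theorem image_le_of_hasDerivAt_le {f f' g g' : ℝ → ℝ} {a b : ℝ}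
    (hf : ∀ x ∈ Icc a b, HasDerivAt f (f' x) x) (hg : ∀ x ∈ Icc a b, HasDerivAt g (g' x) x)
    (ha : f a ≤ g a) (h : ∀ x ∈ Ico a b, f' x ≤ g' x) : ∀ x ∈ Icc a b, f x ≤ g x :=
  image_le_of_deriv_right_le_deriv_boundary
    (fun x hx => (hf x hx).continuousAt.continuousWithinAt)
    (fun x hx => (hf x (Ico_subset_Icc_self hx)).hasDerivWithinAt) ha
    (fun x hx => (hg x hx).continuousAt.continuousWithinAt)
    (fun x hx => (hg x (Ico_subset_Icc_self hx)).hasDerivWithinAt) h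

theorem image_le_of_second_deriv_le {f f' f'' g g' g'' : ℝ → ℝ} {a b : ℝ}
    (hf : ∀ x ∈ Icc a b, HasDerivAt f (f' x) x) (hf' : ∀ x ∈ Icc a b, HasDerivAt f' (f'' x) x)
    (hg : ∀ x ∈ Icc a b, HasDerivAt g (g' x) x) (hg' : ∀ x ∈ Icc a b, HasDerivAt g' (g'' x) x)
    (ha : f a ≤ g a) (ha' : f' a ≤ g' a) (h : ∀ x ∈ Ico a b, f'' x ≤ g'' x) :
    ∀ x ∈ Icc a b, f x ≤ g x :=
  image_le_of_hasDerivAt_le hf hg ha fun x hx =>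
    image_le_of_hasDerivAt_le hf' hg' ha' h x (Ico_subset_Icc_self hx)

theorem Real.monotoneOn_neg_sub_log_one_sub :
    MonotoneOn (fun s : ℝ => -s - Real.log (1 - s)) (Ico 0 1) := by
  intro a ha b hb hab
  have ha' : 0 < 1 - a := sub_pos.mpr ha.2
  have hb' : 0 < 1 - b := sub_pos.mpr hb.2
  have hlog : Real.log (1 - b) - Real.log (1 - a) ≤ (1 - b) / (1 - a) - 1 := by
    rw [← Real.log_div hb'.ne' ha'.ne']
    exact Real.log_le_sub_one_of_pos (div_pos hb' ha')
  have hdiv : (1 - b) / (1 - a) - 1 ≤ a - b := by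
    rw [div_sub_one ha'.ne', div_le_iff₀ ha']
    nlinarith [ha.1]
  dsimp only
  linarith

def SelfConcordantOn (φ : ℝ → ℝ) (s : Set ℝ) : Prop :=
  ∀ t ∈ s, |iteratedDeriv 3 φ t| ≤ 2 * iteratedDeriv 2 φ t ^ ((3 : ℝ) / 2)

section SelfConcordant

variable {φ : ℝ → ℝ} {T : ℝ}

theorem sub_le_inv_sqrt_iteratedDeriv_two_of_selfConcordant (hφ : ContDiff ℝ 3 φ)
    (hpos : ∀ t ∈ Icc 0 T, 0 < iteratedDeriv 2 φ t)
    (hsc : SelfConcordantOn φ (Icc 0 T)) :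
    ∀ t ∈ Icc 0 T, (√(iteratedDeriv 2 φ 0))⁻¹ - t ≤ (√(iteratedDeriv 2 φ t))⁻¹ := by
  set ψ := iteratedDeriv 2 φ
  have hψ : ∀ t, HasDerivAt ψ (iteratedDeriv 3 φ t) t := fun t => by
    rw [iteratedDeriv_succ]
    exact ((hφ.differentiable_iteratedDeriv 2 (by norm_num)) t).hasDerivAt
  refine image_le_of_hasDerivAt_le (f' := fun _ => -1)
    (g' := fun t => -(1 / (2 * √(ψ t)) * iteratedDeriv 3 φ t) / √(ψ t) ^ 2)
    (fun t _ => by simpa using (hasDerivAt_id t).const_sub _)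
    (fun t ht => ((Real.hasDerivAt_sqrt (hpos t ht).ne').comp t (hψ t)).inv
      (Real.sqrt_pos.mpr (hpos t ht)).ne') (by simp) fun t ht => ?_
  have hs : 0 < √(ψ t) := Real.sqrt_pos.mpr (hpos t (Ico_subset_Icc_self ht))
  have h32 : ψ t ^ ((3 : ℝ) / 2) = √(ψ t) ^ 3 := by
    rw [Real.sqrt_eq_rpow, ← Real.rpow_natCast,
      ← Real.rpow_mul (hpos t (Ico_subset_Icc_self ht)).le]
    norm_num
  have hbound : iteratedDeriv 3 φ t ≤ 2 * √(ψ t) ^ 3 :=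
    (le_abs_self _).trans (h32 ▸ hsc t (Ico_subset_Icc_self ht))
  rw [le_div_iff₀ (by positivity)]
  field_simp
  nlinarith

theorem le_sub_log_one_sub_of_selfConcordant (hφ : ContDiff ℝ 3 φ)
    (hpos : ∀ t ∈ Icc 0 T, 0 < iteratedDeriv 2 φ t)
    (hsc : SelfConcordantOn φ (Icc 0 T))
    (hT : 0 ≤ T) (hTr : √(iteratedDeriv 2 φ 0) * T < 1) :
    φ T ≤ φ 0 + deriv φ 0 * T - √(iteratedDeriv 2 φ 0) * T
      - Real.log (1 - √(iteratedDeriv 2 φ 0) * T) := by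
  set r := √(iteratedDeriv 2 φ 0)
  have hr : 0 < r := Real.sqrt_pos.mpr (hpos 0 ⟨le_rfl, hT⟩)
  have hrt : ∀ t ∈ Icc 0 T, 0 < 1 - r * t := fun t ht => by
    nlinarith [ht.2]
  have hψle : ∀ t ∈ Icc 0 T, iteratedDeriv 2 φ t ≤ (r / (1 - r * t)) ^ 2 := fun t ht => by
    have h := sub_le_inv_sqrt_iteratedDeriv_two_of_selfConcordant hφ hpos hsc t ht
    have hq : 0 < r / (1 - r * t) := div_pos hr (hrt t ht)
    have heq : r⁻¹ - t = (r / (1 - r * t))⁻¹ := by field_simp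
    rw [heq, inv_le_inv₀ hq (Real.sqrt_pos.mpr (hpos t ht))] at h
    calc iteratedDeriv 2 φ t = √(iteratedDeriv 2 φ t) ^ 2 := (Real.sq_sqrt (hpos t ht).le).symm
      _ ≤ (r / (1 - r * t)) ^ 2 := pow_le_pow_left₀ (Real.sqrt_nonneg _) h 2
  have hφ' : ∀ t, HasDerivAt φ (deriv φ t) t := fun t =>
    ((hφ.differentiable (by norm_num)) t).hasDerivAt
  have hφ'' : ∀ t, HasDerivAt (deriv φ) (iteratedDeriv 2 φ t) t := fun t => by
    rw [iteratedDeriv_succ, iteratedDeriv_one]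
    exact ((ContDiff.deriv' (n := 2) hφ).differentiable (by norm_num) t).hasDerivAt
  refine image_le_of_second_deriv_le (fun t _ => hφ' t) (fun t _ => hφ'' t)
    (g := fun t => φ 0 + deriv φ 0 * t - r * t - Real.log (1 - r * t))
    (g' := fun t => deriv φ 0 - r + r / (1 - r * t)) (g'' := fun t => (r / (1 - r * t)) ^ 2)
    (fun t ht => ?_) (fun t ht => ?_) (by simp) (by simp)
    (fun t ht => hψle t (Ico_subset_Icc_self ht)) T ⟨hT, le_rfl⟩
  · have hlog := (((hasDerivAt_id t).const_mul r).const_sub 1).log (hrt t ht).ne'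
    refine ((((hasDerivAt_id t).const_mul (deriv φ 0)).const_add (φ 0)).sub
      ((hasDerivAt_id t).const_mul r) |>.sub hlog).congr_deriv ?_
    simp only [id, mul_one]
    ring
  · refine ((((hasDerivAt_id t).const_mul r).const_sub 1).inv (hrt t ht).ne' |>.const_mul r
      |>.const_add (deriv φ 0 - r)).congr_deriv ?_
    simp only [id, mul_one]
    field_simp

theorem dampedNewton_decrease_of_selfConcordant {lam : ℝ} (hφ : ContDiff ℝ 3 φ)
    (hlam : 0 < lam)
    (hpos : ∀ t ∈ Icc 0 (1 / (1 + lam)), 0 < iteratedDeriv 2 φ t)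
    (hsc : SelfConcordantOn φ (Icc 0 (1 / (1 + lam))))
    (hd : deriv φ 0 = -lam ^ 2) (hd2 : iteratedDeriv 2 φ 0 ≤ lam ^ 2) :
    φ (1 / (1 + lam)) - φ 0 ≤ -(lam - Real.log (1 + lam)) := by
  set T := 1 / (1 + lam) with hTdef
  set r := √(iteratedDeriv 2 φ 0)
  have hT : 0 < T := by positivity
  have hr : r ≤ lam := (Real.sqrt_le_sqrt hd2).trans_eq (Real.sqrt_sq hlam.le)
  have hlamT : lam * T = 1 - T := by rw [hTdef]; field_simp; ring
  have hrT : r * T ≤ lam * T := mul_le_mul_of_nonneg_right hr hT.le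
  have hmono := Real.monotoneOn_neg_sub_log_one_sub
    ⟨by positivity, by linarith⟩ ⟨by positivity, by linarith⟩ hrT
  have hbound := le_sub_log_one_sub_of_selfConcordant hφ hpos hsc hT.le (by linarith)
  have hlog : Real.log (1 - lam * T) = -Real.log (1 + lam) := by
    rw [hlamT, sub_sub_cancel, hTdef, one_div, Real.log_inv]
  have hstep : -lam ^ 2 * T - lam * T = -lam := by rw [hTdef]; field_simp; ring
  dsimp only at hmono
  rw [hd] at hbound
  linarith

end SelfConcordant

theorem iteratedDeriv_comp_add_smul {E F : Type*} [AddCommGroup E] [Module ℝ E]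
    [NormedAddCommGroup F] [NormedSpace ℝ F] (f : E → F) (x d : E) (k : ℕ) (t : ℝ) :
    iteratedDeriv k (fun s : ℝ => f (x + s • d)) t
      = iteratedDeriv k (fun s : ℝ => f (x + t • d + s • d)) 0 := by
  have h : (fun s : ℝ => f (x + t • d + s • d)) = fun s => f (x + (t + s) • d) := by
    simp only [add_smul, add_assoc]
  rw [h, iteratedDeriv_comp_const_add (f := fun s : ℝ => f (x + s • d))]
  simp only [add_zero]

theorem stmt16_general {n N p : ℕ} (hpN : p < N)
    (f : (Fin n → ℝ) → ℝ) (grad : (Fin n → ℝ) → Fin n → ℝ)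
    (hess : (Fin n → ℝ) → Matrix (Fin n) (Fin n) ℝ)
    (hf : ContDiff ℝ 3 f)
    (hgrad : ∀ x u : Fin n → ℝ, deriv (fun t : ℝ => f (x + t • u)) 0 = grad x ⬝ᵥ u)
    (hhessq : ∀ x u : Fin n → ℝ,
      iteratedDeriv 2 (fun t : ℝ => f (x + t • u)) 0 = u ⬝ᵥ (hess x *ᵥ u))
    (hhpd : ∀ x, (hess x).PosDef)
    (hsc : ∀ x u : Fin n → ℝ, ∀ t : ℝ,
      |iteratedDeriv 3 (fun s : ℝ => f (x + s • u)) t|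
        ≤ 2 * iteratedDeriv 2 (fun s : ℝ => f (x + s • u)) t ^ ((3 : ℝ) / 2))
    (x : Fin n → ℝ)
    (P : Matrix (Fin n) (Fin N) ℝ)
    (σ : Fin N → ℝ) (u : Fin N → Fin N → ℝ)
    (hσpos : ∀ i, 0 < σ i)
    (hσmono : ∀ i j : Fin N, i ≤ j → σ j ≤ σ i)
    (hortho : ∀ i j : Fin N, u i ⬝ᵥ u j = if i = j then (1 : ℝ) else 0)
    (hHreig : ∀ i, (Pᵀ * hess x * P) *ᵥ u i = σ i • u i)
    (Q : Matrix (Fin N) (Fin N) ℝ)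
    (hQeig : ∀ i : Fin N, Q *ᵥ u i = (if (i : ℕ) < p then σ i else σ ⟨p, hpN⟩) • u i)
    (lamhat : ℝ)
    (hlamhat : lamhat = Real.sqrt (grad x ⬝ᵥ (P *ᵥ (Q⁻¹ *ᵥ (Pᵀ *ᵥ grad x)))))
    (hlamhatpos : 0 < lamhat) :
    f (x + (1 / (1 + lamhat)) • -(P *ᵥ (Q⁻¹ *ᵥ (Pᵀ *ᵥ grad x)))) - f x
      ≤ -(lamhat - Real.log (1 + lamhat)) := by
  set v := P *ᵥ (Q⁻¹ *ᵥ (Pᵀ *ᵥ grad x))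
  have hQ : ∀ i, Q *ᵥ u i = coarseTruncation σ ⟨p, hpN⟩ i • u i := hQeig
  have hquad : v ⬝ᵥ (hess x *ᵥ v) ≤ grad x ⬝ᵥ v :=
    dotProduct_mulVec_le_of_posSemidef_sub
      (isUnit_det_of_orthonormal_eigenvectors hortho hQ fun i =>
        (coarseTruncation_pos hσpos _ i).ne')
      (posSemidef_sub_of_orthonormal_eigenvectors hortho hHreig hQ
        (le_coarseTruncation hσmono _)) _
  have hlam : lamhat ^ 2 = grad x ⬝ᵥ v := by
    rw [hlamhat, Real.sq_sqrt (Real.sqrt_pos.mp (hlamhat ▸ hlamhatpos)).le]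
  have hv : -v ≠ 0 := fun h => by
    rw [neg_eq_zero.mp h, dotProduct_zero] at hlam
    exact (pow_pos hlamhatpos 2).ne' hlam
  have hpos : ∀ t : ℝ, 0 < iteratedDeriv 2 (fun s : ℝ => f (x + s • -v)) t := fun t => by
    rw [iteratedDeriv_comp_add_smul, hhessq]
    simpa using (hhpd _).dotProduct_mulVec_pos hv
  have := dampedNewton_decrease_of_selfConcordant (φ := fun s : ℝ => f (x + s • -v))
    (hf.comp (by fun_prop)) hlamhatpos
    (fun t _ => hpos t) (fun t _ => hsc x (-v) t)
    (by rw [hgrad, dotProduct_neg, hlam])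
    (by rwa [hhessq, hlam, neg_dotProduct, mulVec_neg, dotProduct_neg, neg_neg])
  simpa using this

/-- Let `f` be strictly convex standard self-concordant, `x`
a point, `H := ∇²f(x)`, `P` an `n×N` matrix of full column rank,
`H_r := Pᵀ H P`, `Q` the coarse truncated approximation of `H_r` with
parameter `p`, `λ̂ = (∇f(x)ᵀ P Q⁻¹ Pᵀ ∇f(x))^{1/2} > 0`,
`d̂ = −P Q⁻¹ Pᵀ ∇f(x)` and `t := 1/(1 + λ̂)`.  Then
`f(x + t d̂) − f(x) ≤ −ω(λ̂) = −(λ̂ − log(1 + λ̂))`. -/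
theorem stmt16 {n N p : ℕ} (hp : 1 ≤ p) (hpN : p < N) (hNn : N < n)
    (f : (Fin n → ℝ) → ℝ) (grad : (Fin n → ℝ) → Fin n → ℝ)
    (hess : (Fin n → ℝ) → Matrix (Fin n) (Fin n) ℝ)
    (hf : ContDiff ℝ 3 f)
    (hconv : StrictConvexOn ℝ Set.univ f)
    (hgrad : ∀ x u : Fin n → ℝ, deriv (fun t : ℝ => f (x + t • u)) 0 = grad x ⬝ᵥ u)
    (hhessq : ∀ x u : Fin n → ℝ,
      iteratedDeriv 2 (fun t : ℝ => f (x + t • u)) 0 = u ⬝ᵥ (hess x *ᵥ u))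
    (hhsymm : ∀ x, (hess x).IsSymm)
    (hhpd : ∀ x, (hess x).PosDef)
    (hsc : ∀ x u : Fin n → ℝ, ∀ t : ℝ,
      |iteratedDeriv 3 (fun s : ℝ => f (x + s • u)) t|
        ≤ 2 * iteratedDeriv 2 (fun s : ℝ => f (x + s • u)) t ^ ((3 : ℝ) / 2))
    (hclosed : ∀ c : ℝ, IsClosed {x | f x ≤ c})
    (hbdd : BddBelow (Set.range f))
    (x : Fin n → ℝ)
    (P : Matrix (Fin n) (Fin N) ℝ) (hP : P.rank = N)
    (σ : Fin N → ℝ) (u : Fin N → Fin N → ℝ)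
    (hσpos : ∀ i, 0 < σ i)
    (hσmono : ∀ i j : Fin N, i ≤ j → σ j ≤ σ i)
    (hortho : ∀ i j : Fin N, u i ⬝ᵥ u j = if i = j then (1 : ℝ) else 0)
    (hHreig : ∀ i, (Pᵀ * hess x * P) *ᵥ u i = σ i • u i)
    (Q : Matrix (Fin N) (Fin N) ℝ) (hQsymm : Q.IsSymm)
    (hQeig : ∀ i : Fin N, Q *ᵥ u i = (if (i : ℕ) < p then σ i else σ ⟨p, hpN⟩) • u i)
    (lamhat : ℝ)
    (hlamhat : lamhat = Real.sqrt (grad x ⬝ᵥ (P *ᵥ (Q⁻¹ *ᵥ (Pᵀ *ᵥ grad x)))))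
    (hlamhatpos : 0 < lamhat) :
    f (x + (1 / (1 + lamhat)) • -(P *ᵥ (Q⁻¹ *ᵥ (Pᵀ *ᵥ grad x)))) - f x
      ≤ -(lamhat - Real.log (1 + lamhat)) :=
  stmt16_general hpN f grad hess hf hgrad hhessq hhpd hsc x P σ u hσpos hσmono hortho hHreig Q hQeig
    lamhat hlamhat hlamhatpos
end
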